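/- arXiv:1508.06675 — 7 statements merged into one kernel-verified Lean document; each statement's English description precedes it below -/
import Mathlib

section
/- Let U and W be two normalized graphons (‖U‖₁ = ‖W‖₁ = 1) over probability spaces, with degree distribution functions D_U(λ) = π({x : U_x ≤ λ}) and D_W. Then the Lévy–Prokhorov distance satisfies d_LP(D_U, D_W) ≤ √(2 δ_□(U,W)), where δ_□ is the cut metric over couplings. -/
open MeasureTheory Set

/-!
If `ν` couples `π` and `π'`, testing the cut discrepancy of `U` and `W` along `ν` on the rectangles
`A × (Ω × Ω')` bounds `|∫_A (d_U(x) - d_W(x')) dν|` for every measurable `A`. On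
`A = {d_U ≤ λ} ∩ {d_W > λ + ε}` the integrand is below `-ε`, so `ε ν(A)` is at most the cut
discrepancy; once that is below `ε²`, `ν(A) < ε` and hence `D_U(λ) ≤ D_W(λ + ε) + ε`, and
symmetrically. Letting the cut discrepancy approach `δ_□(U, W)` gives `d_LP ≤ √δ_□(U, W)`.
-/

lemma measureReal_le_measureReal_add_of_setIntegral_sub_le {γ : Type*} [MeasurableSpace γ]
    {ν : Measure γ} [IsFiniteMeasure ν] {X Y : γ → ℝ} (hXm : Measurable X) (hYm : Measurable Y)
    (hX : Integrable X ν) (hY : Integrable Y ν) {c ε : ℝ} (hε : 0 < ε) (hc : c < ε ^ 2)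
    (hXY : ∀ A, MeasurableSet A → ∫ p in A, (Y p - X p) ∂ν ≤ c) (l : ℝ) :
    ν.real {p | X p ≤ l} ≤ ν.real {p | Y p ≤ l + ε} + ε := by
  set A := {p | X p ≤ l} ∩ {p | l + ε < Y p}
  have hA : MeasurableSet A :=
    (measurableSet_le hXm measurable_const).inter (measurableSet_lt measurable_const hYm)
  have hεA : ε * ν.real A ≤ c := calc
    ε * ν.real A = ∫ _ in A, ε ∂ν := by rw [setIntegral_const, smul_eq_mul, mul_comm]
    _ ≤ ∫ p in A, (Y p - X p) ∂ν :=
      setIntegral_mono_on (integrableOn_const (measure_ne_top ν A)) (hY.sub hX).integrableOn hA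
        fun p ⟨(hpX : X p ≤ l), (hpY : l + ε < Y p)⟩ => by linarith
    _ ≤ c := hXY A hA
  have hA_lt : ν.real A < ε := lt_of_mul_lt_mul_left (by nlinarith) hε.le
  calc ν.real {p | X p ≤ l} ≤ ν.real (A ∪ {p | Y p ≤ l + ε}) :=
        measureReal_mono fun p hp =>
          (le_or_gt (Y p) (l + ε)).elim Or.inr fun h => Or.inl ⟨hp, h⟩
    _ ≤ ν.real A + ν.real {p | Y p ≤ l + ε} := measureReal_union_le _ _
    _ ≤ ν.real {p | Y p ≤ l + ε} + ε := by linarith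

lemma sInf_le_sqrt_sInf_of_lt_sq_mem {L R : Set ℝ} (hL : BddBelow L) (hR : R.Nonempty)
    (hRL : ∀ c ∈ R, ∀ ε, 0 < ε → c < ε ^ 2 → ε ∈ L) : sInf L ≤ √(sInf R) := by
  refine le_of_forall_gt_imp_ge_of_dense fun ε hε => ?_
  have hε0 : 0 < ε := (Real.sqrt_nonneg _).trans_lt hε
  obtain ⟨c, hcR, hc⟩ := exists_lt_of_csInf_lt hR ((Real.sqrt_lt' hε0).mp hε)
  exact csInf_le hL (hRL c hcR ε hε0 hc)

lemma MeasureTheory.Integrable.comp_prodMap_of_map_eq {α β E : Type*} [MeasurableSpace α]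
    [MeasurableSpace β] [NormedAddCommGroup E] {μ : Measure α} [SFinite μ] {ν : Measure β}
    [SFinite ν] {F : α × α → E}
    (hF : Integrable F (μ.prod μ)) {f : β → α} (hf : Measurable f) (hν : ν.map f = μ) :
    Integrable (fun q : β × β => F (f q.1, f q.2)) (ν.prod ν) := by
  subst hν
  rw [Measure.map_prod_map ν ν hf hf] at hF
  exact hF.comp_measurable (hf.prodMap hf)

lemma measureReal_setOf_comp_le_of_map_eq {α β : Type*} [MeasurableSpace α] [MeasurableSpace β]
    {μ : Measure α} {ν : Measure β} {f : β → α} (hf : Measurable f) (hν : ν.map f = μ)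
    {g : α → ℝ} (hg : Measurable g) (t : ℝ) :
    ν.real {p | g (f p) ≤ t} = μ.real {x | g x ≤ t} := by
  subst hν
  exact (map_measureReal_apply hf (measurableSet_le hg measurable_const)).symm

section Graphon

variable {Ω Ω' : Type*} [MeasurableSpace Ω] [MeasurableSpace Ω']

noncomputable def degree (π : Measure Ω) (U : Ω → Ω → ℝ) (x : Ω) : ℝ := ∫ y, U x y ∂π

noncomputable def couplingCutNorm (U : Ω → Ω → ℝ) (W : Ω' → Ω' → ℝ) (ν : Measure (Ω × Ω')) : ℝ :=
  sSup {b : ℝ | ∃ S T : Set (Ω × Ω'), MeasurableSet S ∧ MeasurableSet T ∧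
    b = |∫ q in S ×ˢ T, (U q.1.1 q.2.1 - W q.1.2 q.2.2) ∂(ν.prod ν)|}

variable {π : Measure Ω} {π' : Measure Ω'} {U : Ω → Ω → ℝ} {W : Ω' → Ω' → ℝ}
  {ν : Measure (Ω × Ω')}

lemma integrable_sub_of_coupling [SFinite π] [SFinite π'] [SFinite ν]
    (hν₁ : ν.map Prod.fst = π) (hν₂ : ν.map Prod.snd = π')
    (hU : Integrable (fun z : Ω × Ω => U z.1 z.2) (π.prod π))
    (hW : Integrable (fun z : Ω' × Ω' => W z.1 z.2) (π'.prod π')) :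
    Integrable (fun q : (Ω × Ω') × (Ω × Ω') => U q.1.1 q.2.1 - W q.1.2 q.2.2) (ν.prod ν) :=
  (hU.comp_prodMap_of_map_eq measurable_fst hν₁).sub (hW.comp_prodMap_of_map_eq measurable_snd hν₂)

lemma le_couplingCutNorm [SFinite ν]
    (hf : Integrable (fun q : (Ω × Ω') × (Ω × Ω') => U q.1.1 q.2.1 - W q.1.2 q.2.2) (ν.prod ν))
    {S T : Set (Ω × Ω')} (hS : MeasurableSet S) (hT : MeasurableSet T) :
    |∫ q in S ×ˢ T, (U q.1.1 q.2.1 - W q.1.2 q.2.2) ∂(ν.prod ν)| ≤ couplingCutNorm U W ν := by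
  refine le_csSup ⟨∫ q, |U q.1.1 q.2.1 - W q.1.2 q.2.2| ∂(ν.prod ν), ?_⟩ ⟨S, T, hS, hT, rfl⟩
  rintro _ ⟨S, T, -, -, rfl⟩
  exact (abs_integral_le_integral_abs).trans
    (setIntegral_le_integral hf.abs (ae_of_all _ fun _ => abs_nonneg _))

lemma couplingCutNorm_nonneg [SFinite ν]
    (hf : Integrable (fun q : (Ω × Ω') × (Ω × Ω') => U q.1.1 q.2.1 - W q.1.2 q.2.2) (ν.prod ν)) :
    0 ≤ couplingCutNorm U W ν :=
  (abs_nonneg _).trans (le_couplingCutNorm hf MeasurableSet.empty MeasurableSet.empty)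

lemma setIntegral_prod_univ_eq_setIntegral_degree_sub [SFinite π] [SFinite π'] [SFinite ν]
    (hν₁ : ν.map Prod.fst = π) (hν₂ : ν.map Prod.snd = π')
    (hUm : Measurable (fun z : Ω × Ω => U z.1 z.2))
    (hWm : Measurable (fun z : Ω' × Ω' => W z.1 z.2))
    (hU : Integrable (fun z : Ω × Ω => U z.1 z.2) (π.prod π))
    (hW : Integrable (fun z : Ω' × Ω' => W z.1 z.2) (π'.prod π'))
    {A : Set (Ω × Ω')} (hA : MeasurableSet A) :
    ∫ q in A ×ˢ univ, (U q.1.1 q.2.1 - W q.1.2 q.2.2) ∂(ν.prod ν)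
      = ∫ p in A, (degree π U p.1 - degree π' W p.2) ∂ν := by
  have hU' : Integrable (fun q : (Ω × Ω') × (Ω × Ω') => U q.1.1 q.2.1) (ν.prod ν) :=
    hU.comp_prodMap_of_map_eq measurable_fst hν₁
  have hW' : Integrable (fun q : (Ω × Ω') × (Ω × Ω') => W q.1.2 q.2.2) (ν.prod ν) :=
    hW.comp_prodMap_of_map_eq measurable_snd hν₂
  have hUW : IntegrableOn (fun q : (Ω × Ω') × (Ω × Ω') => U q.1.1 q.2.1 - W q.1.2 q.2.2)
      (A ×ˢ univ) (ν.prod ν) := (hU'.sub hW').integrableOn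
  rw [setIntegral_prod _ hUW]
  refine setIntegral_congr_ae hA ?_
  filter_upwards [hU'.prod_right_ae, hW'.prod_right_ae] with p hUp hWp _
  rw [Measure.restrict_univ, integral_sub hUp hWp, degree, degree, ← hν₁, ← hν₂,
    integral_map (f := U p.1) measurable_fst.aemeasurable
      (hUm.comp measurable_prodMk_left).aestronglyMeasurable,
    integral_map (f := W p.2) measurable_snd.aemeasurable
      (hWm.comp measurable_prodMk_left).aestronglyMeasurable]

lemma abs_setIntegral_degree_sub_le_couplingCutNorm [SFinite π] [SFinite π'] [SFinite ν]
    (hν₁ : ν.map Prod.fst = π) (hν₂ : ν.map Prod.snd = π')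
    (hUm : Measurable (fun z : Ω × Ω => U z.1 z.2))
    (hWm : Measurable (fun z : Ω' × Ω' => W z.1 z.2))
    (hU : Integrable (fun z : Ω × Ω => U z.1 z.2) (π.prod π))
    (hW : Integrable (fun z : Ω' × Ω' => W z.1 z.2) (π'.prod π'))
    {A : Set (Ω × Ω')} (hA : MeasurableSet A) :
    |∫ p in A, (degree π U p.1 - degree π' W p.2) ∂ν| ≤ couplingCutNorm U W ν := by
  rw [← setIntegral_prod_univ_eq_setIntegral_degree_sub hν₁ hν₂ hUm hWm hU hW hA]
  exact le_couplingCutNorm (integrable_sub_of_coupling hν₁ hν₂ hU hW) hA MeasurableSet.univ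

lemma levyProkhorov_condition_of_couplingCutNorm_lt_sq [SFinite π] [SFinite π']
    [IsFiniteMeasure ν] (hν₁ : ν.map Prod.fst = π) (hν₂ : ν.map Prod.snd = π')
    (hUm : Measurable (fun z : Ω × Ω => U z.1 z.2))
    (hWm : Measurable (fun z : Ω' × Ω' => W z.1 z.2))
    (hU : Integrable (fun z : Ω × Ω => U z.1 z.2) (π.prod π))
    (hW : Integrable (fun z : Ω' × Ω' => W z.1 z.2) (π'.prod π'))
    {ε : ℝ} (hε : 0 < ε) (hcut : couplingCutNorm U W ν < ε ^ 2) (l : ℝ) :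
    π'.real {x | degree π' W x ≤ l - ε} - ε ≤ π.real {x | degree π U x ≤ l} ∧
      π.real {x | degree π U x ≤ l} ≤ π'.real {x | degree π' W x ≤ l + ε} + ε := by
  have hdU : Measurable (degree π U) := hUm.stronglyMeasurable.integral_prod_right'.measurable
  have hdW : Measurable (degree π' W) := hWm.stronglyMeasurable.integral_prod_right'.measurable
  have hdU₁ : Measurable fun p : Ω × Ω' => degree π U p.1 := hdU.comp measurable_fst
  have hdW₂ : Measurable fun p : Ω × Ω' => degree π' W p.2 := hdW.comp measurable_snd
  have hdUν : Integrable (fun p => degree π U p.1) ν :=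
    (hν₁ ▸ hU.integral_prod_left : Integrable (degree π U) (ν.map Prod.fst)).comp_measurable
      measurable_fst
  have hdWν : Integrable (fun p => degree π' W p.2) ν :=
    (hν₂ ▸ hW.integral_prod_left : Integrable (degree π' W) (ν.map Prod.snd)).comp_measurable
      measurable_snd
  have hmarg₁ := measureReal_setOf_comp_le_of_map_eq measurable_fst hν₁ hdU
  have hmarg₂ := measureReal_setOf_comp_le_of_map_eq measurable_snd hν₂ hdW
  have hcutA (A : Set (Ω × Ω')) (hA : MeasurableSet A) :=
    abs_setIntegral_degree_sub_le_couplingCutNorm hν₁ hν₂ hUm hWm hU hW hA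
  have hcutA' (A : Set (Ω × Ω')) (hA : MeasurableSet A) :
      ∫ p in A, (degree π' W p.2 - degree π U p.1) ∂ν ≤ couplingCutNorm U W ν := calc
    _ = -∫ p in A, (degree π U p.1 - degree π' W p.2) ∂ν := by
      rw [← integral_neg]; simp only [neg_sub]
    _ ≤ _ := (neg_le_abs _).trans (hcutA A hA)
  constructor
  · have h := measureReal_le_measureReal_add_of_setIntegral_sub_le hdW₂ hdU₁ hdWν hdUν hε hcut
      (fun A hA => (le_abs_self _).trans (hcutA A hA)) (l - ε)
    rw [hmarg₁, hmarg₂, sub_add_cancel] at h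
    linarith
  · have h := measureReal_le_measureReal_add_of_setIntegral_sub_le hdU₁ hdW₂ hdUν hdWν hε hcut
      hcutA' l
    rwa [hmarg₁, hmarg₂] at h

end Graphon

theorem levyProkhorov_degree_le_sqrt_cutMetric_general
    {Ω Ω' : Type*} [MeasurableSpace Ω] [MeasurableSpace Ω']
    (π : Measure Ω) (π' : Measure Ω')
    [IsProbabilityMeasure π] [IsProbabilityMeasure π']
    (U : Ω → Ω → ℝ) (W : Ω' → Ω' → ℝ)
    (hUmeas : Measurable (fun z : Ω × Ω => U z.1 z.2))
    (hWmeas : Measurable (fun z : Ω' × Ω' => W z.1 z.2))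
    (hUint : Integrable (fun z : Ω × Ω => U z.1 z.2) (π.prod π))
    (hWint : Integrable (fun z : Ω' × Ω' => W z.1 z.2) (π'.prod π')) :
    -- degree distribution functions
    (sInf {ε : ℝ | 0 < ε ∧ ∀ l : ℝ,
        (π' {x | (∫ y, W x y ∂π') ≤ l - ε}).toReal - ε ≤ (π {x | (∫ y, U x y ∂π) ≤ l}).toReal ∧
        (π {x | (∫ y, U x y ∂π) ≤ l}).toReal ≤ (π' {x | (∫ y, W x y ∂π') ≤ l + ε}).toReal + ε})
      ≤ Real.sqrt (2 *
        sInf {c : ℝ | ∃ ν : Measure (Ω × Ω'), IsProbabilityMeasure ν ∧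
          ν.map Prod.fst = π ∧ ν.map Prod.snd = π' ∧
          c = sSup {b : ℝ | ∃ S T : Set (Ω × Ω'), MeasurableSet S ∧ MeasurableSet T ∧
            b = |∫ q in S ×ˢ T, (U q.1.1 q.2.1 - W q.1.2 q.2.2) ∂(ν.prod ν)|}}) := by
  let R : Set ℝ := {c | ∃ ν : Measure (Ω × Ω'), IsProbabilityMeasure ν ∧
    ν.map Prod.fst = π ∧ ν.map Prod.snd = π' ∧ c = couplingCutNorm U W ν}
  have hR_nonneg : 0 ≤ sInf R := by
    refine Real.sInf_nonneg ?_
    rintro _ ⟨ν, _, hν₁, hν₂, rfl⟩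
    exact couplingCutNorm_nonneg (integrable_sub_of_coupling hν₁ hν₂ hUint hWint)
  have hR_ne : R.Nonempty := ⟨_, π.prod π', inferInstance, by simp, by simp, rfl⟩
  calc _ ≤ √(sInf R) := sInf_le_sqrt_sInf_of_lt_sq_mem ⟨0, fun ε hε => hε.1.le⟩ hR_ne ?_
    _ ≤ _ := Real.sqrt_le_sqrt (by linarith : sInf R ≤ 2 * sInf R)
  rintro _ ⟨ν, _, hν₁, hν₂, rfl⟩ ε hε hcut
  exact ⟨hε, levyProkhorov_condition_of_couplingCutNorm_lt_sq hν₁ hν₂ hUmeas hWmeas hUint hWint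
    hε hcut⟩

/-- The Lévy–Prokhorov distance between the degree distribution functions of two
normalized graphons is at most `√(2 δ_□(U,W))`. -/
theorem levyProkhorov_degree_le_sqrt_cutMetric
    {Ω Ω' : Type*} [MeasurableSpace Ω] [MeasurableSpace Ω']
    (π : Measure Ω) (π' : Measure Ω')
    [IsProbabilityMeasure π] [IsProbabilityMeasure π']
    (U : Ω → Ω → ℝ) (W : Ω' → Ω' → ℝ)
    (hUmeas : Measurable (fun z : Ω × Ω => U z.1 z.2))
    (hWmeas : Measurable (fun z : Ω' × Ω' => W z.1 z.2))
    (hUsymm : ∀ x y, U x y = U y x) (hWsymm : ∀ x y, W x y = W y x)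
    (hUnn : ∀ x y, 0 ≤ U x y) (hWnn : ∀ x y, 0 ≤ W x y)
    (hUint : Integrable (fun z : Ω × Ω => U z.1 z.2) (π.prod π))
    (hWint : Integrable (fun z : Ω' × Ω' => W z.1 z.2) (π'.prod π'))
    (hUnorm : ∫ z, U z.1 z.2 ∂(π.prod π) = 1)
    (hWnorm : ∫ z, W z.1 z.2 ∂(π'.prod π') = 1) :
    -- degree distribution functions
    (sInf {ε : ℝ | 0 < ε ∧ ∀ l : ℝ,
        (π' {x | (∫ y, W x y ∂π') ≤ l - ε}).toReal - ε ≤ (π {x | (∫ y, U x y ∂π) ≤ l}).toReal ∧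
        (π {x | (∫ y, U x y ∂π) ≤ l}).toReal ≤ (π' {x | (∫ y, W x y ∂π') ≤ l + ε}).toReal + ε})
      ≤ Real.sqrt (2 *
        sInf {c : ℝ | ∃ ν : Measure (Ω × Ω'), IsProbabilityMeasure ν ∧
          ν.map Prod.fst = π ∧ ν.map Prod.snd = π' ∧
          c = sSup {b : ℝ | ∃ S T : Set (Ω × Ω'), MeasurableSet S ∧ MeasurableSet T ∧
            b = |∫ q in S ×ˢ T, (U q.1.1 q.2.1 - W q.1.2 q.2.2) ∂(ν.prod ν)|}}) :=
  levyProkhorov_degree_le_sqrt_cutMetric_general π π' U W hUmeas hWmeas hUint hWint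
end

section
/- Let X₁,…,Xₙ be independent real-valued random variables with X = Σᵢ Xᵢ, and suppose there exists X₀ ∈ [0,∞) such that Σᵢ E[Xᵢ^m] ≤ X₀ for all integers m ≥ 2. Then for all t ≥ 0, Pr(X - E[X] ≥ X₀ t) ≤ exp(-min{t, t²}·X₀/3). -/
/-!
Even moments bounded uniformly in the exponent force `|Xᵢ| ≤ 1` almost surely (Markov's
inequality with ever higher powers). For `|x| ≤ 1` and `l ≥ 0` the exponential series gives
`exp (l x) ≤ 1 + l x + (exp l - 1 - l) x²`, so by independence the moment generating function of
`X - E[X]` at `l` is at most `exp ((exp l - 1 - l) X₀)`. The Chernoff bound at `l = log (1 + t)`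
then yields `exp (-X₀ ((1 + t) log (1 + t) - t))`, and `(1 + t) log (1 + t) - t ≥ min t t² / 3`
follows from `log (1 + t) ≥ 2t / (t + 2)`.
-/

open MeasureTheory ProbabilityTheory Filter Real
open scoped Nat

namespace Real

lemma hasSum_exp_sub_one_sub (y : ℝ) :
    HasSum (fun m : ℕ => y ^ (m + 2) / (m + 2)!) (exp y - 1 - y) := by
  have h := (hasSum_nat_add_iff' 2).2 (NormedSpace.expSeries_div_hasSum_exp y)
  simpa [← exp_eq_exp_ℝ, Finset.sum_range_succ, sub_sub] using h

lemma exp_mul_le_one_add_mul_add_mul_sq {l x : ℝ} (hl : 0 ≤ l) (hx : |x| ≤ 1) :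
    exp (l * x) ≤ 1 + l * x + (exp l - 1 - l) * x ^ 2 := by
  have hterm : ∀ m : ℕ, (l * x) ^ (m + 2) / (m + 2)! ≤ x ^ 2 * (l ^ (m + 2) / (m + 2)!) := by
    intro m
    have hpow : x ^ (m + 2) ≤ x ^ 2 := calc
      x ^ (m + 2) ≤ |x| ^ (m + 2) := (le_abs_self _).trans (abs_pow x _).le
      _ ≤ |x| ^ 2 := pow_le_pow_of_le_one (abs_nonneg x) hx (by omega)
      _ = x ^ 2 := sq_abs x
    rw [mul_pow, mul_div_assoc', mul_comm (x ^ 2)]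
    gcongr
  have := hasSum_le hterm (hasSum_exp_sub_one_sub (l * x)) ((hasSum_exp_sub_one_sub l).mul_left _)
  linarith

lemma min_div_three_le_one_add_mul_log_one_add_sub {t : ℝ} (ht : 0 ≤ t) :
    min t (t ^ 2) / 3 ≤ (1 + t) * log (1 + t) - t := by
  have hlog : (1 + t) * (2 * t / (t + 2)) ≤ (1 + t) * log (1 + t) := by
    gcongr; exact le_log_one_add_of_nonneg ht
  have hmin : min t (t ^ 2) / 3 ≤ t ^ 2 / (t + 2) := by
    rw [div_le_div_iff₀ (by norm_num) (by linarith)]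
    rcases le_total t 1 with h | h
    · nlinarith [min_le_right t (t ^ 2)]
    · nlinarith [min_le_left t (t ^ 2)]
  have heq : (1 + t) * (2 * t / (t + 2)) - t = t ^ 2 / (t + 2) := by
    field_simp; ring
  linarith

end Real

section

variable {Ω : Type*} [MeasurableSpace Ω] {μ : Measure Ω} {Y : Ω → ℝ}

lemma measure_le_abs_eq_zero_of_integral_pow_le [IsFiniteMeasure μ] {C a : ℝ} (ha : 1 < a)
    (hint : ∀ᶠ k in atTop, Integrable (fun ω => Y ω ^ (2 * k)) μ)
    (hbound : ∀ᶠ k in atTop, ∫ ω, Y ω ^ (2 * k) ∂μ ≤ C) :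
    μ {ω | a ≤ |Y ω|} = 0 := by
  have ha2 : 0 < (a ^ 2)⁻¹ := by positivity
  have markov : ∀ᶠ k in atTop, μ.real {ω | a ≤ |Y ω|} ≤ C * ((a ^ 2)⁻¹) ^ k := by
    filter_upwards [hint, hbound] with k hint_k hbound_k
    have hsub : {ω | a ≤ |Y ω|} ⊆ {ω | a ^ (2 * k) ≤ Y ω ^ (2 * k)} := fun ω hω => by
      simpa [pow_mul, sq_abs] using pow_le_pow_left₀ (by linarith) (Set.mem_ofPred.1 hω) (2 * k)
    have := mul_meas_ge_le_integral_of_nonneg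
      (ae_of_all _ fun ω => (even_two_mul k).pow_nonneg (Y ω)) hint_k (a ^ (2 * k))
    rw [inv_pow, ← pow_mul, ← div_eq_mul_inv, le_div_iff₀ (by positivity), mul_comm]
    exact (mul_le_mul_of_nonneg_left (measureReal_mono hsub) (by positivity)).trans
      (this.trans hbound_k)
  have hlim : Tendsto (fun k : ℕ => C * ((a ^ 2)⁻¹) ^ k) atTop (nhds 0) := by
    simpa using (tendsto_pow_atTop_nhds_zero_of_lt_one ha2.le
      (inv_lt_one_of_one_lt₀ (by nlinarith))).const_mul C
  exact (measureReal_eq_zero_iff).1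
    (le_antisymm (ge_of_tendsto hlim markov) measureReal_nonneg)

lemma ae_abs_le_one_of_integral_pow_le [IsFiniteMeasure μ] {C : ℝ}
    (hint : ∀ᶠ k in atTop, Integrable (fun ω => Y ω ^ (2 * k)) μ)
    (hbound : ∀ᶠ k in atTop, ∫ ω, Y ω ^ (2 * k) ∂μ ≤ C) :
    ∀ᵐ ω ∂μ, |Y ω| ≤ 1 := by
  have hlt : ∀ k : ℕ, ∀ᵐ ω ∂μ, |Y ω| < 1 + 1 / (k + 1) := fun k => by
    simpa [ae_iff] using measure_le_abs_eq_zero_of_integral_pow_le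
      (a := 1 + 1 / (k + 1)) (by simp; positivity) hint hbound
  filter_upwards [ae_all_iff.2 hlt] with ω hω
  have hlim : Tendsto (fun k : ℕ => 1 + 1 / ((k : ℝ) + 1)) atTop (nhds 1) := by
    simpa using tendsto_one_div_add_atTop_nhds_zero_nat.const_add (1 : ℝ)
  exact ge_of_tendsto' hlim fun k => (hω k).le

lemma integrable_exp_mul_of_ae_abs_le [IsFiniteMeasure μ] {C : ℝ} (hY : AEMeasurable Y μ)
    (hC : ∀ᵐ ω ∂μ, |Y ω| ≤ C) (t : ℝ) : Integrable (fun ω => exp (t * Y ω)) μ := by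
  refine Integrable.of_bound (by fun_prop) (exp (|t| * C)) ?_
  filter_upwards [hC] with ω hω
  rw [norm_of_nonneg (exp_pos _).le, exp_le_exp]
  calc t * Y ω ≤ |t| * |Y ω| := (le_abs_self _).trans (abs_mul t (Y ω)).le
    _ ≤ |t| * C := by gcongr

lemma mgf_le_exp_of_ae_abs_le_one [IsProbabilityMeasure μ] {l : ℝ} (hl : 0 ≤ l)
    (hY : AEMeasurable Y μ) (hY1 : ∀ᵐ ω ∂μ, |Y ω| ≤ 1) :
    mgf Y μ l ≤ exp (l * μ[Y] + (exp l - 1 - l) * ∫ ω, Y ω ^ 2 ∂μ) := by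
  have hint : Integrable Y μ := .of_bound hY.aestronglyMeasurable 1 hY1
  have hint2 : Integrable (fun ω => Y ω ^ 2) μ :=
    .of_bound (hY.pow_const 2).aestronglyMeasurable 1 <| by
      filter_upwards [hY1] with ω hω
      simpa [abs_le] using hω
  have hlin : Integrable (fun ω => 1 + l * Y ω) μ := (integrable_const 1).add (hint.const_mul l)
  calc mgf Y μ l ≤ ∫ ω, (1 + l * Y ω + (exp l - 1 - l) * Y ω ^ 2) ∂μ :=
        integral_mono_ae (integrable_exp_mul_of_ae_abs_le hY hY1 l)
          (hlin.add (hint2.const_mul _))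
          (hY1.mono fun ω hω => exp_mul_le_one_add_mul_add_mul_sq hl hω)
    _ = 1 + (l * μ[Y] + (exp l - 1 - l) * ∫ ω, Y ω ^ 2 ∂μ) := by
        rw [integral_add hlin (hint2.const_mul _),
          integral_add (integrable_const 1) (hint.const_mul l), integral_const_mul,
          integral_const_mul]
        simp [add_assoc]
    _ ≤ _ := add_one_le_exp _ |>.trans_eq' (add_comm _ _)

namespace ProbabilityTheory

variable {ι : Type*} [Fintype ι] {X : ι → Ω → ℝ}

lemma iIndepFun.mgf_sum_le_exp_of_ae_abs_le_one (hindep : iIndepFun X μ)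
    (hX : ∀ i, AEMeasurable (X i) μ) (hX1 : ∀ i, ∀ᵐ ω ∂μ, |X i ω| ≤ 1) {l : ℝ} (hl : 0 ≤ l) :
    mgf (∑ i, X i) μ l ≤
      exp (l * ∑ i, μ[X i] + (exp l - 1 - l) * ∑ i, ∫ ω, X i ω ^ 2 ∂μ) := by
  have := hindep.isProbabilityMeasure
  rw [hindep.mgf_sum₀ hX, Finset.mul_sum, Finset.mul_sum, ← Finset.sum_add_distrib, exp_sum]
  exact Finset.prod_le_prod (fun i _ => mgf_nonneg) fun i _ =>
    mgf_le_exp_of_ae_abs_le_one hl (hX i) (hX1 i)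

lemma iIndepFun.measureReal_sum_sub_integral_ge_le (hindep : iIndepFun X μ)
    (hX : ∀ i, AEMeasurable (X i) μ) (hX1 : ∀ i, ∀ᵐ ω ∂μ, |X i ω| ≤ 1) {l s V : ℝ} (hl : 0 ≤ l)
    (hV : ∑ i, ∫ ω, X i ω ^ 2 ∂μ ≤ V) :
    μ.real {ω | s ≤ ∑ i, X i ω - ∫ ω', ∑ i, X i ω' ∂μ} ≤ exp (-l * s + (exp l - 1 - l) * V) := by
  have := hindep.isProbabilityMeasure
  have hmean : ∫ ω, ∑ i, X i ω ∂μ = ∑ i, μ[X i] := integral_finsetSum _ fun i _ =>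
    .of_bound (hX i).aestronglyMeasurable 1 (hX1 i)
  have hsum : ∀ᵐ ω ∂μ, |(∑ i, X i) ω| ≤ Fintype.card ι := by
    filter_upwards [ae_all_iff.2 hX1] with ω hω
    calc |(∑ i, X i) ω| ≤ ∑ i, |X i ω| := by
          simpa only [Finset.sum_apply] using Finset.abs_sum_le_sum_abs _ _
      _ ≤ ∑ _i : ι, (1 : ℝ) := Finset.sum_le_sum fun i _ => hω i
      _ = Fintype.card ι := by simp
  have hchernoff := measure_ge_le_exp_mul_mgf (∫ ω, ∑ i, X i ω ∂μ + s) hl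
    (integrable_exp_mul_of_ae_abs_le (Finset.aemeasurable_sum _ fun i _ => hX i) hsum l)
  have hc : 0 ≤ exp l - 1 - l := by linarith [add_one_le_exp l]
  calc μ.real {ω | s ≤ ∑ i, X i ω - ∫ ω', ∑ i, X i ω' ∂μ}
      = μ.real {ω | ∫ ω, ∑ i, X i ω ∂μ + s ≤ (∑ i, X i) ω} := by
        congr 1 with ω
        simp only [Set.mem_ofPred_eq, Finset.sum_apply]
        constructor <;> intro h <;> linarith
    _ ≤ exp (-l * (∫ ω, ∑ i, X i ω ∂μ + s)) * mgf (∑ i, X i) μ l := hchernoff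
    _ ≤ exp (-l * (∫ ω, ∑ i, X i ω ∂μ + s)) *
          exp (l * ∑ i, μ[X i] + (exp l - 1 - l) * V) := by
        gcongr
        exact (hindep.mgf_sum_le_exp_of_ae_abs_le_one hX hX1 hl).trans (by gcongr)
    _ = exp (-l * s + (exp l - 1 - l) * V) := by
        rw [← exp_add, hmean]; ring_nf

end ProbabilityTheory

end

theorem generalized_chernoff_general
    {Ω : Type*} [MeasurableSpace Ω] (μ : Measure Ω) [IsProbabilityMeasure μ]
    (n : ℕ) (X : Fin n → Ω → ℝ)
    (hindep : iIndepFun X μ)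
    (hint : ∀ (i : Fin n) (m : ℕ), 1 ≤ m → Integrable (fun ω => X i ω ^ m) μ)
    (X₀ : ℝ) (hX₀ : 0 ≤ X₀)
    (hmom : ∀ m : ℕ, 2 ≤ m → ∑ i, ∫ ω, X i ω ^ m ∂μ ≤ X₀)
    (t : ℝ) (ht : 0 ≤ t) :
    μ {ω | X₀ * t ≤ (∑ i, X i ω) - ∫ ω', ∑ i, X i ω' ∂μ} ≤
      ENNReal.ofReal (Real.exp (-(min t (t ^ 2)) * X₀ / 3)) := by
  have hX1 : ∀ i, ∀ᵐ ω ∂μ, |X i ω| ≤ 1 := fun i =>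
    ae_abs_le_one_of_integral_pow_le (C := X₀)
      ((eventually_ge_atTop 1).mono fun k hk => hint i (2 * k) (by omega))
      ((eventually_ge_atTop 1).mono fun k hk => (hmom (2 * k) (by omega)).trans' <|
        Finset.single_le_sum (f := fun j => ∫ ω, X j ω ^ (2 * k) ∂μ)
          (fun j _ => integral_nonneg fun ω => (even_two_mul k).pow_nonneg _) (Finset.mem_univ i))
  have hexp : exp (log (1 + t)) = 1 + t := exp_log (by linarith)
  have htail := hindep.measureReal_sum_sub_integral_ge_le (s := X₀ * t) (l := log (1 + t))
    (fun i => (hint i 1 le_rfl).aemeasurable.congr (by simp)) hX1 (log_nonneg (by linarith))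
    (hmom 2 le_rfl)
  rw [← ofReal_measureReal]
  refine ENNReal.ofReal_le_ofReal (htail.trans (exp_le_exp.2 ?_))
  have hlog := mul_le_mul_of_nonneg_left (min_div_three_le_one_add_mul_log_one_add_sub ht) hX₀
  rw [hexp]
  linarith

/-- Generalized multiplicative Chernoff bound: if `X₁,…,Xₙ` are independent with
`Σᵢ E[Xᵢ^m] ≤ X₀` for all `m ≥ 2`, then
`Pr(X - E[X] ≥ X₀ t) ≤ exp(-min{t,t²} X₀ / 3)`. -/
theorem generalized_chernoff
    {Ω : Type*} [MeasurableSpace Ω] (μ : Measure Ω) [IsProbabilityMeasure μ]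
    (n : ℕ) (X : Fin n → Ω → ℝ)
    (hmeas : ∀ i, Measurable (X i))
    (hindep : iIndepFun X μ)
    (hint : ∀ (i : Fin n) (m : ℕ), 1 ≤ m → Integrable (fun ω => X i ω ^ m) μ)
    (X₀ : ℝ) (hX₀ : 0 ≤ X₀)
    (hmom : ∀ m : ℕ, 2 ≤ m → ∑ i, ∫ ω, X i ω ^ m ∂μ ≤ X₀)
    (t : ℝ) (ht : 0 ≤ t) :
    μ {ω | X₀ * t ≤ (∑ i, X i ω) - ∫ ω', ∑ i, X i ω' ∂μ} ≤
      ENNReal.ofReal (Real.exp (-(min t (t ^ 2)) * X₀ / 3)) :=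
  generalized_chernoff_general μ n X hindep hint X₀ hX₀ hmom t ht
end

section
/- Let n ≥ 2, let Q be a symmetric n×n matrix with entries in [0,1] and zero diagonal, and let A be the random symmetric 0-1 matrix with A_{ij} = 1 with probability Q_{ij} independently for i < j and A_{ii} = 0. Then E[‖A - Q‖_□] ≤ 16·√(ρ(Q)/n), where ρ(Q) = (1/n²)Σ_{i,j} Q_{ij} and ‖M‖_□ = max over S,T ⊆ [n] of (1/n²)|Σ_{(i,j)∈S×T} M_{ij}|. Moreover, if n·ρ(Q) ≥ 1, then ‖A - Q‖_□ ≤ 15·√(ρ(Q)/n) with probability at least 1 - e^{-n}. -/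
open MeasureTheory ProbabilityTheory

/-- The cut norm of an `n × n` real matrix:
`‖M‖_□ = max_{S,T ⊆ [n]} (1/n²)|Σ_{(i,j) ∈ S×T} M_{ij}|`. -/
noncomputable def matrixCutNorm (n : ℕ) (M : Fin n → Fin n → ℝ) : ℝ :=
  ⨆ S : Finset (Fin n), ⨆ T : Finset (Fin n),
    (1 / (n : ℝ) ^ 2) * |∑ i ∈ S, ∑ j ∈ T, M i j|

/-- The density of an `n × n` matrix: `ρ(Q) = (1/n²) Σ_{i,j} Q_{ij}`. -/
noncomputable def matrixDensity (n : ℕ) (Q : Fin n → Fin n → ℝ) : ℝ :=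
  (1 / (n : ℝ) ^ 2) * ∑ i, ∑ j, Q i j

/-!
For fixed `S, T`, symmetry and the zero diagonal turn `Σ_{S×T} (A - Q)` into a weighted sum
`Σ_{i<j} w_{ij} (A_{ij} - Q_{ij})` of independent centred Bernoulli variables with weights
`w_{ij} ∈ {0, 1, 2}`. Since `E e^{r(B - q)} ≤ e^{q r²}` for `|r| ≤ 1`, a Chernoff bound at
`λ = 1/(2√(nρ))` shows that this sum exceeds `15 n² √(ρ/n)` in absolute value with probability
at most `2 e^{-7n}`, and a union bound over the `4ⁿ` pairs `(S, T)` leaves `e^{-n}`.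
For the expectation: if `nρ ≥ 1`, the cut norm is at most `1` and `e^{-n} ≤ 1/n ≤ √(ρ/n)`;
if `nρ < 1`, the crude bound `‖A - Q‖_□ ≤ ρ(A) + ρ(Q)` has mean `2ρ ≤ 2√(ρ/n)`.
-/

open Real Finset

section Bernoulli

lemma indicator_setOf_eq_one_of_mem_zero_one {Ω : Type*} {B : Ω → ℝ}
    (hB : ∀ ω, B ω = 0 ∨ B ω = 1) : {ω | B ω = 1}.indicator 1 = B := by
  funext ω
  rcases hB ω with h | h <;> simp [h]

variable {Ω : Type*} [MeasurableSpace Ω] {μ : Measure Ω} {B : Ω → ℝ} {q : ℝ}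

lemma integrable_of_mem_zero_one [IsFiniteMeasure μ] (hBm : Measurable B)
    (hB : ∀ ω, B ω = 0 ∨ B ω = 1) : Integrable B μ := by
  rw [← indicator_setOf_eq_one_of_mem_zero_one hB]
  exact (integrable_const 1).indicator (hBm (measurableSet_singleton 1))

lemma integral_of_mem_zero_one (hBm : Measurable B) (hB : ∀ ω, B ω = 0 ∨ B ω = 1)
    (hq : 0 ≤ q) (hμ : μ {ω | B ω = 1} = ENNReal.ofReal q) : ∫ ω, B ω ∂μ = q := by
  rw [← indicator_setOf_eq_one_of_mem_zero_one hB,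
    integral_indicator_one (s := {ω | B ω = 1}) (hBm (measurableSet_singleton 1)),
    measureReal_def, hμ, ENNReal.toReal_ofReal hq]

lemma exp_mul_sub_of_mem_zero_one {b : ℝ} (hb : b = 0 ∨ b = 1) (r : ℝ) :
    exp (r * (b - q)) = exp (-(r * q)) * (1 + (exp r - 1) * b) := by
  rcases hb with rfl | rfl
  · simp
  · rw [mul_sub, mul_one, sub_eq_add_neg, exp_add]; ring

lemma integrable_exp_mul_sub_of_mem_zero_one [IsFiniteMeasure μ] (hBm : Measurable B)
    (hB : ∀ ω, B ω = 0 ∨ B ω = 1) (r : ℝ) :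
    Integrable (fun ω => exp (r * (B ω - q))) μ := by
  simp_rw [exp_mul_sub_of_mem_zero_one (hB _) r]
  exact ((integrable_const 1).add ((integrable_of_mem_zero_one hBm hB).const_mul _)).const_mul _

lemma mgf_sub_le_of_mem_zero_one [IsProbabilityMeasure μ] (hBm : Measurable B)
    (hB : ∀ ω, B ω = 0 ∨ B ω = 1) (hq : 0 ≤ q) (hμ : μ {ω | B ω = 1} = ENNReal.ofReal q)
    {r : ℝ} (hr : |r| ≤ 1) :
    mgf (fun ω => B ω - q) μ r ≤ exp (q * r ^ 2) := by
  have hmgf : mgf (fun ω => B ω - q) μ r = exp (-(r * q)) * (1 + q * (exp r - 1)) := by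
    simp_rw [mgf, exp_mul_sub_of_mem_zero_one (hB _) r]
    rw [integral_const_mul, integral_add (integrable_const 1)
      ((integrable_of_mem_zero_one hBm hB).const_mul _), integral_const_mul,
      integral_of_mem_zero_one hBm hB hq hμ]
    simp [mul_comm]
  calc mgf (fun ω => B ω - q) μ r = exp (-(r * q)) * (1 + q * (exp r - 1)) := hmgf
    _ ≤ exp (-(r * q)) * exp (q * (exp r - 1)) := by
        gcongr
        linarith [add_one_le_exp (q * (exp r - 1))]
    _ = exp (q * (exp r - 1 - r)) := by rw [← exp_add]; ring_nf
    _ ≤ exp (q * r ^ 2) := by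
        gcongr
        exact (le_abs_self _).trans (abs_exp_sub_one_sub_id_le hr)

end Bernoulli

section Chernoff

variable {Ω : Type*} [MeasurableSpace Ω] {μ : Measure Ω} [IsProbabilityMeasure μ]
  {ι : Type*} [Fintype ι] {B : ι → Ω → ℝ} {q : ι → ℝ}

lemma measureReal_weighted_sum_ge_le (hBm : ∀ i, Measurable (B i))
    (hB : ∀ i ω, B i ω = 0 ∨ B i ω = 1) (hq : ∀ i, 0 ≤ q i)
    (hμ : ∀ i, μ {ω | B i ω = 1} = ENNReal.ofReal (q i)) (hind : iIndepFun B μ)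
    (d : ι → ℝ) (t : ℝ) {lam : ℝ} (hlam : 0 ≤ lam) (hd : ∀ i, |lam * d i| ≤ 1) :
    μ.real {ω | t ≤ ∑ i, d i * (B i ω - q i)} ≤
      exp (-lam * t + lam ^ 2 * ∑ i, q i * d i ^ 2) := by
  set X : ι → Ω → ℝ := fun i ω => d i * (B i ω - q i)
  have hXm : ∀ i, Measurable (X i) := fun i => ((hBm i).sub_const _).const_mul _
  have hXind : iIndepFun X μ :=
    hind.comp (fun i x => d i * (x - q i)) fun i => (measurable_id.sub_const _).const_mul _
  have hsum : (fun ω => ∑ i, d i * (B i ω - q i)) = ∑ i, X i := by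
    ext ω; simp [X]
  have hint : Integrable (fun ω => exp (lam * (∑ i, X i) ω)) μ :=
    hXind.integrable_exp_mul_sum hXm fun i _ => by
      simpa only [X, ← mul_assoc] using
        integrable_exp_mul_sub_of_mem_zero_one (q := q i) (hBm i) (hB i) (lam * d i)
  calc μ.real {ω | t ≤ ∑ i, d i * (B i ω - q i)} = μ.real {ω | t ≤ (∑ i, X i) ω} := by
        rw [← hsum]
    _ ≤ exp (-lam * t) * mgf (∑ i, X i) μ lam := measure_ge_le_exp_mul_mgf t hlam hint
    _ = exp (-lam * t) * ∏ i, mgf (fun ω => B i ω - q i) μ (d i * lam) := by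
        simp_rw [hXind.mgf_sum hXm, X, mgf_const_mul]
    _ ≤ exp (-lam * t) * ∏ i, exp (q i * (d i * lam) ^ 2) := by
        gcongr with i
        · exact fun i _ => mgf_nonneg
        · exact mgf_sub_le_of_mem_zero_one (hBm i) (hB i) (hq i) (hμ i)
            (by rw [mul_comm]; exact hd i)
    _ = exp (-lam * t + lam ^ 2 * ∑ i, q i * d i ^ 2) := by
        rw [← exp_sum, ← exp_add, mul_sum]
        ring_nf

lemma measureReal_abs_weighted_sum_ge_le (hBm : ∀ i, Measurable (B i))
    (hB : ∀ i ω, B i ω = 0 ∨ B i ω = 1) (hq : ∀ i, 0 ≤ q i)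
    (hμ : ∀ i, μ {ω | B i ω = 1} = ENNReal.ofReal (q i)) (hind : iIndepFun B μ)
    {w : ι → ℝ} (hw : ∀ i, |w i| ≤ 2) (t : ℝ) {lam : ℝ} (hlam0 : 0 ≤ lam)
    (hlam : lam ≤ 1 / 2) :
    μ.real {ω | t ≤ |∑ i, w i * (B i ω - q i)|} ≤
      2 * exp (-lam * t + 4 * lam ^ 2 * ∑ i, q i) := by
  have hone_sided : ∀ d : ι → ℝ, (∀ i, |d i| ≤ 2) →
      μ.real {ω | t ≤ ∑ i, d i * (B i ω - q i)} ≤ exp (-lam * t + 4 * lam ^ 2 * ∑ i, q i) := by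
    intro d hd
    refine (measureReal_weighted_sum_ge_le hBm hB hq hμ hind d t hlam0 fun i => ?_).trans ?_
    · rw [abs_mul, abs_of_nonneg hlam0]
      nlinarith [hd i, abs_nonneg (d i)]
    · have hsq : ∀ i, d i ^ 2 ≤ 4 := fun i => by
        have := abs_le.mp (hd i)
        nlinarith
      have : ∑ i, q i * d i ^ 2 ≤ 4 * ∑ i, q i := by
        rw [mul_comm, sum_mul]
        exact sum_le_sum fun i _ => mul_le_mul_of_nonneg_left (hsq i) (hq i)
      gcongr exp (_ + ?_)
      nlinarith [sq_nonneg lam]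
  have hneg : ∀ ω, -∑ i, w i * (B i ω - q i) = ∑ i, -w i * (B i ω - q i) := by
    intro ω; simp [sum_neg_distrib]
  calc μ.real {ω | t ≤ |∑ i, w i * (B i ω - q i)|}
      ≤ μ.real ({ω | t ≤ ∑ i, w i * (B i ω - q i)} ∪
          {ω | t ≤ ∑ i, -w i * (B i ω - q i)}) := by
        refine measureReal_mono fun ω hω => ?_
        simp only [Set.mem_ofPred_eq, Set.mem_union, ← hneg] at hω ⊢
        exact le_abs.mp hω
    _ ≤ _ := measureReal_union_le _ _
    _ ≤ 2 * exp (-lam * t + 4 * lam ^ 2 * ∑ i, q i) := by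
        linarith [hone_sided w hw, hone_sided (fun i => -w i) fun i => by simpa using hw i]

end Chernoff

lemma integral_le_add_measureReal_lt {Ω : Type*} [MeasurableSpace Ω] {μ : Measure Ω}
    [IsProbabilityMeasure μ] {f : Ω → ℝ} (hf : Measurable f) (h0 : ∀ ω, 0 ≤ f ω)
    (h1 : ∀ ω, f ω ≤ 1) {b : ℝ} (hb : 0 ≤ b) :
    ∫ ω, f ω ∂μ ≤ b + μ.real {ω | b < f ω} := by
  have hs : MeasurableSet {ω | b < f ω} := measurableSet_lt measurable_const hf
  have hind : Integrable ({ω | b < f ω}.indicator 1) μ :=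
    (integrable_const (1 : ℝ)).indicator hs
  have hle : ∀ ω, f ω ≤ b + {ω | b < f ω}.indicator 1 ω := fun ω => by
    by_cases h : b < f ω
    · simp [Set.indicator_of_mem (show ω ∈ {ω | b < f ω} from h)]
      linarith [h1 ω]
    · simp [Set.indicator_of_notMem (show ω ∉ {ω | b < f ω} from h)]
      linarith
  calc ∫ ω, f ω ∂μ ≤ ∫ ω, (b + {ω | b < f ω}.indicator 1 ω) ∂μ :=
        integral_mono_of_nonneg (ae_of_all _ h0) ((integrable_const b).add hind)
          (ae_of_all _ hle)
    _ = b + μ.real {ω | b < f ω} := by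
        rw [integral_add (integrable_const b) hind, integral_indicator_one hs]
        simp

section Pairs

lemma sum_eq_sum_lt_add_swap {α M : Type*} [Fintype α] [LinearOrder α] [AddCommMonoid M]
    (f : α × α → M) (hf : ∀ a, f (a, a) = 0) :
    ∑ p, f p = ∑ p : {p : α × α // p.1 < p.2}, (f p + f p.1.swap) := by
  have hle : ∑ p with ¬ p.1 < p.2, f p = ∑ p with p.2 < p.1, f p := by
    refine (sum_subset (fun p => by simpa using le_of_lt) fun p hp hp' => ?_).symm
    simp only [mem_filter, mem_univ, true_and, not_lt] at hp hp'
    rw [show p = (p.1, p.1) from Prod.ext rfl (le_antisymm hp hp'), hf]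
  have hswap : ∑ p : α × α with p.2 < p.1, f p = ∑ p : α × α with p.1 < p.2, f p.swap :=
    sum_nbij' Prod.swap Prod.swap (by simp) (by simp) (by simp) (by simp) (by simp)
  rw [sum_add_distrib, ← sum_filter_add_sum_filter_not univ (fun p : α × α => p.1 < p.2), hle,
    hswap, ← sum_subtype_eq_sum_filter, ← sum_subtype_eq_sum_filter, subtype_univ]

def cutWeight {α : Type*} [DecidableEq α] (S T : Finset α) (p : α × α) : ℝ :=
  (if p ∈ S ×ˢ T then 1 else 0) + (if p.swap ∈ S ×ˢ T then 1 else 0)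

lemma abs_cutWeight_le_two {α : Type*} [DecidableEq α] (S T : Finset α) (p : α × α) :
    |cutWeight S T p| ≤ 2 := by
  unfold cutWeight
  split_ifs <;> norm_num

variable {α : Type*} [Fintype α] [LinearOrder α] {M : α → α → ℝ}

lemma sum_sum_eq_sum_lt_cutWeight_mul (hsymm : ∀ i j, M i j = M j i) (hdiag : ∀ i, M i i = 0)
    (S T : Finset α) :
    ∑ i ∈ S, ∑ j ∈ T, M i j =
      ∑ p : {p : α × α // p.1 < p.2}, cutWeight S T p * M p.1.1 p.1.2 := by
  rw [← sum_product' (f := M), ← Fintype.sum_ite_mem,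
    sum_eq_sum_lt_add_swap _ fun a => by simp [hdiag]]
  refine sum_congr rfl fun p _ => ?_
  simp only [cutWeight, Prod.fst_swap, Prod.snd_swap, hsymm p.1.2 p.1.1]
  split_ifs <;> ring

lemma two_mul_sum_lt_eq_sum_sum (hsymm : ∀ i j, M i j = M j i) (hdiag : ∀ i, M i i = 0) :
    2 * ∑ p : {p : α × α // p.1 < p.2}, M p.1.1 p.1.2 = ∑ i, ∑ j, M i j := by
  rw [sum_sum_eq_sum_lt_cutWeight_mul hsymm hdiag univ univ, mul_sum]
  simp only [cutWeight, mem_product, mem_univ, and_self, if_true]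
  norm_num

end Pairs

section CutNorm

variable {n : ℕ}

lemma matrixCutNorm_nonneg (M : Fin n → Fin n → ℝ) : 0 ≤ matrixCutNorm n M :=
  le_ciSup_of_le (Set.finite_range _).bddAbove ∅ <|
    le_ciSup_of_le (Set.finite_range _).bddAbove ∅ (by simp)

lemma matrixCutNorm_le {M : Fin n → Fin n → ℝ} {c : ℝ}
    (h : ∀ S T : Finset (Fin n), 1 / (n : ℝ) ^ 2 * |∑ i ∈ S, ∑ j ∈ T, M i j| ≤ c) :
    matrixCutNorm n M ≤ c :=
  ciSup_le fun S => ciSup_le fun T => h S T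

lemma exists_lt_of_lt_matrixCutNorm {M : Fin n → Fin n → ℝ} {c : ℝ}
    (h : c < matrixCutNorm n M) :
    ∃ S T : Finset (Fin n), c < 1 / (n : ℝ) ^ 2 * |∑ i ∈ S, ∑ j ∈ T, M i j| := by
  contrapose! h
  exact matrixCutNorm_le fun S T => h S T

lemma matrixCutNorm_le_sum_abs (M : Fin n → Fin n → ℝ) :
    matrixCutNorm n M ≤ 1 / (n : ℝ) ^ 2 * ∑ i, ∑ j, |M i j| :=
  matrixCutNorm_le fun S T => by
    gcongr
    calc |∑ i ∈ S, ∑ j ∈ T, M i j| ≤ ∑ i ∈ S, ∑ j ∈ T, |M i j| :=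
          (abs_sum_le_sum_abs _ _).trans (sum_le_sum fun i _ => abs_sum_le_sum_abs _ _)
      _ ≤ ∑ i ∈ S, ∑ j, |M i j| :=
          sum_le_sum fun i _ => sum_le_univ_sum_of_nonneg fun _ => abs_nonneg _
      _ ≤ ∑ i, ∑ j, |M i j| :=
          sum_le_univ_sum_of_nonneg fun _ => sum_nonneg fun _ _ => abs_nonneg _

lemma matrixCutNorm_le_one {M : Fin n → Fin n → ℝ} (h : ∀ i j, |M i j| ≤ 1) :
    matrixCutNorm n M ≤ 1 := by
  refine (matrixCutNorm_le_sum_abs M).trans ?_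
  calc 1 / (n : ℝ) ^ 2 * ∑ i, ∑ j, |M i j|
      ≤ 1 / (n : ℝ) ^ 2 * ∑ _i : Fin n, ∑ _j : Fin n, 1 := by
        gcongr with i _ j _; exact h i j
    _ ≤ 1 := by
        rcases eq_or_ne n 0 with rfl | hn
        · simp
        · simp [← sq, hn]

lemma measurable_matrixCutNorm {Ω : Type*} [MeasurableSpace Ω] {M : Ω → Fin n → Fin n → ℝ}
    (hM : ∀ i j, Measurable fun ω => M ω i j) : Measurable fun ω => matrixCutNorm n (M ω) := by
  unfold matrixCutNorm
  fun_prop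

lemma matrixDensity_nonneg {Q : Fin n → Fin n → ℝ} (hQ : ∀ i j, 0 ≤ Q i j) :
    0 ≤ matrixDensity n Q :=
  mul_nonneg (by positivity) (sum_nonneg fun i _ => sum_nonneg fun j _ => hQ i j)

lemma matrixDensity_le_sqrt_div {Q : Fin n → Fin n → ℝ} (hQ : ∀ i j, 0 ≤ Q i j)
    (h : (n : ℝ) * matrixDensity n Q ≤ 1) :
    matrixDensity n Q ≤ √(matrixDensity n Q / n) := by
  rcases eq_or_ne n 0 with rfl | hn
  · simp [matrixDensity]
  have hρ := matrixDensity_nonneg hQ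
  refine le_sqrt_of_sq_le ?_
  rw [le_div_iff₀ (by positivity)]
  nlinarith

end CutNorm

lemma natCast_pos_of_one_le_mul {n : ℕ} {x : ℝ} (h : 1 ≤ n * x) : (0 : ℝ) < n := by
  rcases n.eq_zero_or_pos with rfl | hn
  · norm_num at h
  · exact_mod_cast hn

lemma four_pow_mul_two_mul_exp_le {n : ℕ} (hn : 0 < n) :
    (4 : ℝ) ^ n * (2 * exp (-(7 * n))) ≤ exp (-n) := by
  have h2n : (2 : ℝ) ≤ 2 ^ n := by simpa using pow_le_pow_right₀ one_le_two hn
  have h8 : (8 : ℝ) ≤ exp 3 := by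
    have h2e : (2 : ℝ) ≤ exp 1 := by linarith [add_one_le_exp (1 : ℝ)]
    calc (8 : ℝ) = 2 ^ 3 := by norm_num
      _ ≤ exp 1 ^ 3 := by gcongr
      _ = exp 3 := by rw [← exp_nat_mul]; norm_num
  calc (4 : ℝ) ^ n * (2 * exp (-(7 * n))) ≤ (4 ^ n * 2 ^ n) * exp (-(7 * n)) := by
        rw [← mul_assoc]; gcongr
    _ ≤ exp 3 ^ n * exp (-(7 * n)) := by rw [← mul_pow]; gcongr; norm_num [h8]
    _ = exp (-(4 * n)) := by rw [← exp_nat_mul, ← exp_add]; ring_nf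
    _ ≤ exp (-n) := by gcongr; linarith [(Nat.cast_nonneg n : (0 : ℝ) ≤ n)]

structure IsBernoulliMatrix {Ω : Type*} [MeasurableSpace Ω] {n : ℕ} (μ : Measure Ω)
    (Q : Fin n → Fin n → ℝ) (A : Ω → Fin n → Fin n → ℝ) : Prop where
  measurable : ∀ i j, Measurable fun ω => A ω i j
  mem_zero_one : ∀ ω i j, A ω i j = 0 ∨ A ω i j = 1
  symm : ∀ ω i j, A ω i j = A ω j i
  diag : ∀ ω i, A ω i i = 0
  indep : iIndepFun (fun p : {p : Fin n × Fin n // p.1 < p.2} => fun ω => A ω p.1.1 p.1.2) μ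
  prob : ∀ i j, i < j → μ {ω | A ω i j = 1} = ENNReal.ofReal (Q i j)

namespace IsBernoulliMatrix

variable {Ω : Type*} [MeasurableSpace Ω] {μ : Measure Ω} {n : ℕ} {Q : Fin n → Fin n → ℝ}
  {A : Ω → Fin n → Fin n → ℝ}

lemma integral_apply (hA : IsBernoulliMatrix μ Q A) (hQsymm : ∀ i j, Q i j = Q j i)
    (hQ0 : ∀ i j, 0 ≤ Q i j) (hQdiag : ∀ i, Q i i = 0) (i j : Fin n) :
    ∫ ω, A ω i j ∂μ = Q i j := by
  rcases lt_trichotomy i j with h | rfl | h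
  · exact integral_of_mem_zero_one (hA.measurable i j) (hA.mem_zero_one · i j) (hQ0 i j)
      (hA.prob i j h)
  · simp [hA.diag, hQdiag]
  · simp_rw [hA.symm _ i j, hQsymm i j]
    exact integral_of_mem_zero_one (hA.measurable j i) (hA.mem_zero_one · j i) (hQ0 j i)
      (hA.prob j i h)

lemma integral_cutNorm_sub_le_two_mul_density [IsProbabilityMeasure μ]
    (hA : IsBernoulliMatrix μ Q A) (hQsymm : ∀ i j, Q i j = Q j i) (hQ0 : ∀ i j, 0 ≤ Q i j)
    (hQdiag : ∀ i, Q i i = 0) :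
    ∫ ω, matrixCutNorm n (fun i j => A ω i j - Q i j) ∂μ ≤ 2 * matrixDensity n Q := by
  have hA0 : ∀ ω i j, 0 ≤ A ω i j := fun ω i j => by
    rcases hA.mem_zero_one ω i j with h | h <;> simp [h]
  have hAint : ∀ i j, Integrable (fun ω => A ω i j) μ := fun i j =>
    integrable_of_mem_zero_one (hA.measurable i j) (hA.mem_zero_one · i j)
  have hint : ∀ i j, Integrable (fun ω => A ω i j + Q i j) μ := fun i j =>
    (hAint i j).add (integrable_const _)
  have hmean : ∀ i j, ∫ ω, (A ω i j + Q i j) ∂μ = 2 * Q i j := fun i j => by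
    rw [integral_add (hAint i j) (integrable_const _),
      hA.integral_apply hQsymm hQ0 hQdiag, integral_const]
    simp; ring
  calc ∫ ω, matrixCutNorm n (fun i j => A ω i j - Q i j) ∂μ
      ≤ ∫ ω, 1 / (n : ℝ) ^ 2 * ∑ i, ∑ j, (A ω i j + Q i j) ∂μ := by
        refine integral_mono_of_nonneg (ae_of_all _ fun ω => matrixCutNorm_nonneg _)
          ((integrable_finsetSum _ fun i _ => integrable_finsetSum _ fun j _ =>
            hint i j).const_mul _) (ae_of_all _ fun ω => ?_)
        refine (matrixCutNorm_le_sum_abs _).trans ?_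
        dsimp only
        gcongr with i _ j _
        exact (abs_sub _ _).trans_eq (by rw [abs_of_nonneg (hA0 ω i j), abs_of_nonneg (hQ0 i j)])
    _ = 2 * matrixDensity n Q := by
        rw [integral_const_mul, integral_finsetSum _ fun i _ =>
          integrable_finsetSum _ fun j _ => hint i j]
        simp_rw [integral_finsetSum _ fun j _ => hint _ j, hmean, matrixDensity, mul_sum]
        ring_nf

lemma measureReal_abs_cutSum_ge_le [IsProbabilityMeasure μ] (hA : IsBernoulliMatrix μ Q A)
    (hQsymm : ∀ i j, Q i j = Q j i) (hQ0 : ∀ i j, 0 ≤ Q i j) (hQdiag : ∀ i, Q i i = 0)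
    (S T : Finset (Fin n)) (t : ℝ) {lam : ℝ} (hlam0 : 0 ≤ lam) (hlam : lam ≤ 1 / 2) :
    μ.real {ω | t ≤ |∑ i ∈ S, ∑ j ∈ T, (A ω i j - Q i j)|} ≤
      2 * exp (-lam * t + 2 * lam ^ 2 * ∑ i, ∑ j, Q i j) := by
  have hpairs (ω : Ω) : ∑ i ∈ S, ∑ j ∈ T, (A ω i j - Q i j) =
      ∑ p : {p : Fin n × Fin n // p.1 < p.2},
        cutWeight S T p * (A ω p.1.1 p.1.2 - Q p.1.1 p.1.2) :=
    sum_sum_eq_sum_lt_cutWeight_mul (M := fun i j => A ω i j - Q i j)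
      (fun i j => by rw [hA.symm, hQsymm]) (fun i => by simp [hA.diag, hQdiag]) S T
  simp_rw [hpairs, ← two_mul_sum_lt_eq_sum_sum hQsymm hQdiag]
  convert measureReal_abs_weighted_sum_ge_le
    (fun p : {p : Fin n × Fin n // p.1 < p.2} => hA.measurable p.1.1 p.1.2)
    (fun p ω => hA.mem_zero_one ω p.1.1 p.1.2) (fun p => hQ0 p.1.1 p.1.2)
    (fun p => hA.prob p.1.1 p.1.2 p.2) hA.indep (abs_cutWeight_le_two S T ·) t hlam0 hlam
    using 3
  ring

lemma measureReal_cutNorm_sub_gt_le [IsProbabilityMeasure μ] (hA : IsBernoulliMatrix μ Q A)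
    (hn : 0 < n) (hQsymm : ∀ i j, Q i j = Q j i) (hQ0 : ∀ i j, 0 ≤ Q i j)
    (hQdiag : ∀ i, Q i i = 0) (b : ℝ) {lam : ℝ} (hlam0 : 0 ≤ lam) (hlam : lam ≤ 1 / 2) :
    μ.real {ω | b < matrixCutNorm n (fun i j => A ω i j - Q i j)} ≤
      4 ^ n * (2 * exp (-lam * (n ^ 2 * b) + 2 * lam ^ 2 * (n ^ 2 * matrixDensity n Q))) := by
  have hmass : (n : ℝ) ^ 2 * matrixDensity n Q = ∑ i, ∑ j, Q i j := by
    rw [matrixDensity]; field_simp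
  rw [hmass]
  calc μ.real {ω | b < matrixCutNorm n (fun i j => A ω i j - Q i j)}
      ≤ μ.real (⋃ ST : Finset (Fin n) × Finset (Fin n),
          {ω | n ^ 2 * b ≤ |∑ i ∈ ST.1, ∑ j ∈ ST.2, (A ω i j - Q i j)|}) :=
        measureReal_mono fun ω hω => by
          obtain ⟨S, T, h⟩ := exists_lt_of_lt_matrixCutNorm hω
          rw [one_div, inv_mul_eq_div, lt_div_iff₀ (by positivity)] at h
          exact Set.mem_iUnion.mpr ⟨(S, T), by simp only [Set.mem_ofPred_eq]; linarith⟩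
    _ ≤ ∑ ST : Finset (Fin n) × Finset (Fin n),
          μ.real {ω | n ^ 2 * b ≤ |∑ i ∈ ST.1, ∑ j ∈ ST.2, (A ω i j - Q i j)|} :=
        measureReal_iUnion_fintype_le _
    _ ≤ ∑ _ST : Finset (Fin n) × Finset (Fin n),
          2 * exp (-lam * (n ^ 2 * b) + 2 * lam ^ 2 * ∑ i, ∑ j, Q i j) :=
        sum_le_sum fun ST _ =>
          hA.measureReal_abs_cutSum_ge_le hQsymm hQ0 hQdiag ST.1 ST.2 _ hlam0 hlam
    _ = 4 ^ n * (2 * exp (-lam * (n ^ 2 * b) + 2 * lam ^ 2 * ∑ i, ∑ j, Q i j)) := by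
        rw [sum_const, card_univ, Fintype.card_prod, Fintype.card_finset, Fintype.card_fin,
          nsmul_eq_mul]
        push_cast
        rw [← mul_pow]
        norm_num

lemma measureReal_cutNorm_sub_gt_le_exp_neg [IsProbabilityMeasure μ]
    (hA : IsBernoulliMatrix μ Q A) (hQsymm : ∀ i j, Q i j = Q j i) (hQ0 : ∀ i j, 0 ≤ Q i j)
    (hQdiag : ∀ i, Q i i = 0) (hρ : 1 ≤ (n : ℝ) * matrixDensity n Q) :
    μ.real {ω | 15 * √(matrixDensity n Q / n) <
      matrixCutNorm n (fun i j => A ω i j - Q i j)} ≤ exp (-n) := by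
  set ρ := matrixDensity n Q
  have hn : (0 : ℝ) < n := natCast_pos_of_one_le_mul hρ
  set s := √(n * ρ)
  have hs1 : 1 ≤ s := one_le_sqrt.mpr hρ
  have hs2 : s ^ 2 = n * ρ := sq_sqrt (by linarith)
  have hsqrt : √(ρ / n) = s / n := by
    rw [show ρ / n = s ^ 2 / (n : ℝ) ^ 2 by rw [hs2]; field_simp, sqrt_div' _ (sq_nonneg _),
      sqrt_sq (by linarith), sqrt_sq (Nat.cast_nonneg n)]
  have hexp : -(1 / (2 * s)) * (n ^ 2 * (15 * √(ρ / n))) + 2 * (1 / (2 * s)) ^ 2 * (n ^ 2 * ρ)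
      = -(7 * n) := by
    rw [hsqrt]
    field_simp
    linear_combination -hs2
  refine (hA.measureReal_cutNorm_sub_gt_le (Nat.cast_pos.mp hn) hQsymm hQ0 hQdiag
    (15 * √(ρ / n)) (lam := 1 / (2 * s)) (by positivity)
    (by rw [div_le_div_iff₀ (by positivity) two_pos]; linarith)).trans ?_
  rw [hexp]
  exact four_pow_mul_two_mul_exp_le (Nat.cast_pos.mp hn)

lemma ofReal_one_sub_exp_neg_le_measure_cutNorm_sub_le [IsProbabilityMeasure μ]
    (hA : IsBernoulliMatrix μ Q A) (hQsymm : ∀ i j, Q i j = Q j i) (hQ0 : ∀ i j, 0 ≤ Q i j)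
    (hQdiag : ∀ i, Q i i = 0) (hρ : 1 ≤ (n : ℝ) * matrixDensity n Q) :
    ENNReal.ofReal (1 - exp (-n)) ≤
      μ {ω | matrixCutNorm n (fun i j => A ω i j - Q i j) ≤ 15 * √(matrixDensity n Q / n)} := by
  have hbad : MeasurableSet {ω | 15 * √(matrixDensity n Q / n) <
      matrixCutNorm n (fun i j => A ω i j - Q i j)} :=
    measurableSet_lt measurable_const
      (measurable_matrixCutNorm fun i j => (hA.measurable i j).sub_const _)
  have hgood := probReal_compl_eq_one_sub (μ := μ) hbad
  simp only [Set.compl_ofPred, not_lt] at hgood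
  rw [ENNReal.ofReal_le_iff_le_toReal (measure_ne_top _ _), ← measureReal_def, hgood]
  linarith [hA.measureReal_cutNorm_sub_gt_le_exp_neg hQsymm hQ0 hQdiag hρ]

lemma integral_cutNorm_sub_le_of_one_le [IsProbabilityMeasure μ] (hA : IsBernoulliMatrix μ Q A)
    (hQsymm : ∀ i j, Q i j = Q j i) (hQmem : ∀ i j, Q i j ∈ Set.Icc (0 : ℝ) 1)
    (hQdiag : ∀ i, Q i i = 0) (hρ : 1 ≤ (n : ℝ) * matrixDensity n Q) :
    ∫ ω, matrixCutNorm n (fun i j => A ω i j - Q i j) ∂μ ≤ 16 * √(matrixDensity n Q / n) := by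
  have hQ0 : ∀ i j, 0 ≤ Q i j := fun i j => (hQmem i j).1
  have hn : (0 : ℝ) < n := natCast_pos_of_one_le_mul hρ
  have hentry : ∀ ω i j, |A ω i j - Q i j| ≤ 1 := fun ω i j => by
    rcases hA.mem_zero_one ω i j with h | h <;> rw [h, abs_le] <;> constructor <;>
      linarith [hQmem i j |>.1, hQmem i j |>.2]
  have hexp : exp (-n) ≤ √(matrixDensity n Q / n) := by
    calc exp (-n) ≤ 1 / n := by
          rw [exp_neg, one_div]
          exact inv_anti₀ hn (by linarith [add_one_le_exp (n : ℝ)])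
      _ ≤ √(matrixDensity n Q / n) := by
          refine le_sqrt_of_sq_le ?_
          rw [div_pow, one_pow, div_le_div_iff₀ (by positivity) hn]
          nlinarith
  calc ∫ ω, matrixCutNorm n (fun i j => A ω i j - Q i j) ∂μ
      ≤ 15 * √(matrixDensity n Q / n) + μ.real {ω | 15 * √(matrixDensity n Q / n) <
          matrixCutNorm n (fun i j => A ω i j - Q i j)} :=
        integral_le_add_measureReal_lt
          (measurable_matrixCutNorm fun i j => (hA.measurable i j).sub_const _)
          (fun ω => matrixCutNorm_nonneg _) (fun ω => matrixCutNorm_le_one (hentry ω))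
          (by positivity)
    _ ≤ 16 * √(matrixDensity n Q / n) := by
        linarith [hA.measureReal_cutNorm_sub_gt_le_exp_neg hQsymm hQ0 hQdiag hρ]

end IsBernoulliMatrix

theorem cutNorm_concentration_general
    {Ω : Type*} [MeasurableSpace Ω] (μ : Measure Ω) [IsProbabilityMeasure μ]
    (n : ℕ)
    (Q : Fin n → Fin n → ℝ)
    (hQsymm : ∀ i j, Q i j = Q j i)
    (hQmem : ∀ i j, Q i j ∈ Set.Icc (0 : ℝ) 1)
    (hQdiag : ∀ i, Q i i = 0)
    (A : Ω → Fin n → Fin n → ℝ)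
    (hAmeas : ∀ i j, Measurable (fun ω => A ω i j))
    (hAval : ∀ ω i j, A ω i j = 0 ∨ A ω i j = 1)
    (hAsymm : ∀ ω i j, A ω i j = A ω j i)
    (hAdiag : ∀ ω i, A ω i i = 0)
    (hAindep : iIndepFun
      (fun p : {p : Fin n × Fin n // p.1 < p.2} => fun ω => A ω p.1.1 p.1.2) μ)
    (hAprob : ∀ i j, i < j → μ {ω | A ω i j = 1} = ENNReal.ofReal (Q i j)) :
    (∫ ω, matrixCutNorm n (fun i j => A ω i j - Q i j) ∂μ ≤
        16 * Real.sqrt (matrixDensity n Q / n)) ∧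
    (1 ≤ (n : ℝ) * matrixDensity n Q →
      ENNReal.ofReal (1 - Real.exp (-(n : ℝ))) ≤
        μ {ω | matrixCutNorm n (fun i j => A ω i j - Q i j) ≤
          15 * Real.sqrt (matrixDensity n Q / n)}) := by
  have hA : IsBernoulliMatrix μ Q A := ⟨hAmeas, hAval, hAsymm, hAdiag, hAindep, hAprob⟩
  have hQ0 : ∀ i j, 0 ≤ Q i j := fun i j => (hQmem i j).1
  refine ⟨?_, hA.ofReal_one_sub_exp_neg_le_measure_cutNorm_sub_le hQsymm hQ0 hQdiag⟩
  rcases le_or_gt 1 ((n : ℝ) * matrixDensity n Q) with hρ | hρ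
  · exact hA.integral_cutNorm_sub_le_of_one_le hQsymm hQmem hQdiag hρ
  · calc ∫ ω, matrixCutNorm n (fun i j => A ω i j - Q i j) ∂μ ≤ 2 * matrixDensity n Q :=
          hA.integral_cutNorm_sub_le_two_mul_density hQsymm hQ0 hQdiag
      _ ≤ 16 * √(matrixDensity n Q / n) := by
          nlinarith [matrixDensity_le_sqrt_div hQ0 hρ.le, matrixDensity_nonneg hQ0]

/-- Concentration of the cut norm of `A - Q` for `A = Bern(Q)`:
`E[‖A-Q‖_□] ≤ 16 √(ρ(Q)/n)`, and if `nρ(Q) ≥ 1` then `‖A-Q‖_□ ≤ 15 √(ρ(Q)/n)`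
with probability at least `1 - e^{-n}`. -/
theorem cutNorm_concentration
    {Ω : Type*} [MeasurableSpace Ω] (μ : Measure Ω) [IsProbabilityMeasure μ]
    (n : ℕ) (hn : 2 ≤ n)
    (Q : Fin n → Fin n → ℝ)
    (hQsymm : ∀ i j, Q i j = Q j i)
    (hQmem : ∀ i j, Q i j ∈ Set.Icc (0 : ℝ) 1)
    (hQdiag : ∀ i, Q i i = 0)
    (A : Ω → Fin n → Fin n → ℝ)
    (hAmeas : ∀ i j, Measurable (fun ω => A ω i j))
    (hAval : ∀ ω i j, A ω i j = 0 ∨ A ω i j = 1)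
    (hAsymm : ∀ ω i j, A ω i j = A ω j i)
    (hAdiag : ∀ ω i, A ω i i = 0)
    (hAindep : iIndepFun
      (fun p : {p : Fin n × Fin n // p.1 < p.2} => fun ω => A ω p.1.1 p.1.2) μ)
    (hAprob : ∀ i j, i < j → μ {ω | A ω i j = 1} = ENNReal.ofReal (Q i j)) :
    (∫ ω, matrixCutNorm n (fun i j => A ω i j - Q i j) ∂μ ≤
        16 * Real.sqrt (matrixDensity n Q / n)) ∧
    (1 ≤ (n : ℝ) * matrixDensity n Q →
      ENNReal.ofReal (1 - Real.exp (-(n : ℝ))) ≤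
        μ {ω | matrixCutNorm n (fun i j => A ω i j - Q i j) ≤
          15 * Real.sqrt (matrixDensity n Q / n)}) :=
  cutNorm_concentration_general μ n Q hQsymm hQmem hQdiag A hAmeas hAval hAsymm hAdiag hAindep
    hAprob
end

section
/- Let 1 ≤ k ≤ n, let Q be a symmetric n×n matrix with entries in [0,1] and zero diagonal, and let A = Bern(Q) be the random graph with independent edges of probabilities Q_{ij}. Define ε = max over maps π : [n] → [k] of ‖A_π − Q_π‖₁, where M_π denotes the matrix obtained by replacing each entry by the average over its block V_{π(i)} × V_{π(j)}, and ‖M‖₁ = (1/n²)Σ|M_{ij}|. Then E[ε] ≤ 9·√(ρ(Q)·((1+log k)/n + k²/n²)), and if n·ρ(Q) ≥ 1, then ε ≤ 8·√(ρ(Q)·((1+log k)/n + k²/n²)) with probability at least 1 − e^{-n}. -/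
/-! For a fixed partition `p`, block averaging is self-adjoint against matrices that are constant
on blocks, so `‖A_p - Q_p‖₁ = n⁻² ∑ s(p x, p y) (A - Q)_{xy}` for a sign pattern `s` on pairs of
blocks. Such a signed sum is a sum of independent centred Bernoulli variables over the pairs
`x < y`, and `E exp (v (X - q)) ≤ exp (v² q)` for `|v| ≤ 1` gives a Chernoff bound depending on
the density `ρ`. When `ρ` dominates the rate `c = (1 + log k)/n + k²/n²`, a union bound over the
`kⁿ 2^(k²)` pairs `(p, s)` controls `ε`; otherwise the crude bound `ε ≤ (∑ A + ∑ Q)/n²` and a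
single Chernoff bound on the number of edges suffice. Since `ε ≤ 2`, the exceptional event of
probability `e⁻ⁿ` costs at most `√(ρ c)` in expectation; when `nρ < 1` we use `E ε ≤ 2ρ`. -/

open MeasureTheory ProbabilityTheory

def classOf {n k : ℕ} (p : Fin n → Fin k) (i : Fin k) : Finset (Fin n) :=
  Finset.univ.filter (fun u => p u = i)

/-- `M_π`: each entry of `M` is replaced by the average of `M` over its block
`V_{π(x)} × V_{π(y)}` (zero for empty blocks). -/
noncomputable def blockAvg {n k : ℕ} (p : Fin n → Fin k) (M : Fin n → Fin n → ℝ) :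
    Fin n → Fin n → ℝ :=
  fun x y =>
    if (classOf p (p x)).card = 0 ∨ (classOf p (p y)).card = 0 then 0
    else (∑ u ∈ classOf p (p x), ∑ v ∈ classOf p (p y), M u v) /
      (((classOf p (p x)).card : ℝ) * ((classOf p (p y)).card : ℝ))

noncomputable def matrixL1Norm (n : ℕ) (M : Fin n → Fin n → ℝ) : ℝ :=
  (1 / (n : ℝ) ^ 2) * ∑ i, ∑ j, |M i j|

open Finset Real

section BlockAverage

variable {n k : ℕ}

lemma mem_classOf {p : Fin n → Fin k} {i : Fin k} {x : Fin n} : x ∈ classOf p i ↔ p x = i := by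
  simp [classOf]

lemma card_classOf_pos (p : Fin n → Fin k) (x : Fin n) : 0 < #(classOf p (p x)) :=
  card_pos.2 ⟨x, mem_classOf.2 rfl⟩

lemma blockAvg_apply (p : Fin n → Fin k) (M : Fin n → Fin n → ℝ) (x y : Fin n) :
    blockAvg p M x y = (∑ u ∈ classOf p (p x), ∑ v ∈ classOf p (p y), M u v) /
      ((#(classOf p (p x)) : ℝ) * #(classOf p (p y))) :=
  if_neg <| not_or.2 ⟨(card_classOf_pos p x).ne', (card_classOf_pos p y).ne'⟩

lemma blockAvg_sub (p : Fin n → Fin k) (M N : Fin n → Fin n → ℝ) (x y : Fin n) :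
    blockAvg p M x y - blockAvg p N x y = blockAvg p (fun u v => M u v - N u v) x y := by
  simp only [blockAvg_apply, ← sub_div, ← sum_sub_distrib]

lemma blockAvg_nonneg (p : Fin n → Fin k) {M : Fin n → Fin n → ℝ} (hM : ∀ u v, 0 ≤ M u v)
    (x y : Fin n) : 0 ≤ blockAvg p M x y := by
  rw [blockAvg_apply]
  exact div_nonneg (sum_nonneg fun u _ => sum_nonneg fun v _ => hM u v) (by positivity)

lemma sum_sum_eq_sum_sum_classOf (p : Fin n → Fin k) (G : Fin n → Fin n → ℝ) :
    ∑ x, ∑ y, G x y = ∑ i, ∑ j, ∑ x ∈ classOf p i, ∑ y ∈ classOf p j, G x y := by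
  have fiberwise (f : Fin n → ℝ) : ∑ i, ∑ x ∈ classOf p i, f x = ∑ x, f x :=
    sum_fiberwise univ p f
  calc ∑ x, ∑ y, G x y = ∑ x, ∑ j, ∑ y ∈ classOf p j, G x y := by simp only [fiberwise]
    _ = ∑ j, ∑ x, ∑ y ∈ classOf p j, G x y := sum_comm
    _ = ∑ j, ∑ i, ∑ x ∈ classOf p i, ∑ y ∈ classOf p j, G x y := by simp only [fiberwise]
    _ = ∑ i, ∑ j, ∑ x ∈ classOf p i, ∑ y ∈ classOf p j, G x y := sum_comm

lemma sum_mul_blockAvg (p : Fin n → Fin k) (w : Fin k → Fin k → ℝ) (M : Fin n → Fin n → ℝ) :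
    ∑ x, ∑ y, w (p x) (p y) * blockAvg p M x y = ∑ x, ∑ y, w (p x) (p y) * M x y := by
  rw [sum_sum_eq_sum_sum_classOf p, sum_sum_eq_sum_sum_classOf p]
  refine sum_congr rfl fun i _ => sum_congr rfl fun j _ => ?_
  set V := classOf p i
  set W := classOf p j
  calc ∑ x ∈ V, ∑ y ∈ W, w (p x) (p y) * blockAvg p M x y
      = ∑ _x ∈ V, ∑ _y ∈ W, w i j * ((∑ u ∈ V, ∑ v ∈ W, M u v) / ((#V : ℝ) * #W)) := by
        refine sum_congr rfl fun x hx => sum_congr rfl fun y hy => ?_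
        rw [blockAvg_apply, mem_classOf.1 hx, mem_classOf.1 hy]
    _ = w i j * ∑ u ∈ V, ∑ v ∈ W, M u v := by
        rcases V.eq_empty_or_nonempty with hV | hV
        · simp [hV]
        rcases W.eq_empty_or_nonempty with hW | hW
        · simp [hW]
        have : (#V : ℝ) * #W ≠ 0 := by positivity [hV.card_pos, hW.card_pos]
        simp only [sum_const, nsmul_eq_mul]
        field_simp
    _ = ∑ x ∈ V, ∑ y ∈ W, w (p x) (p y) * M x y := by
        simp only [mul_sum]
        refine sum_congr rfl fun x hx => sum_congr rfl fun y hy => ?_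
        rw [mem_classOf.1 hx, mem_classOf.1 hy]

def blockSign (p : Fin n → Fin k) (S : Fin k → Fin k → Bool) (x y : Fin n) : ℝ :=
  if S (p x) (p y) then 1 else -1

lemma abs_blockSign_le_one (p : Fin n → Fin k) (S : Fin k → Fin k → Bool) (x y : Fin n) :
    |blockSign p S x y| ≤ 1 := by
  unfold blockSign; split_ifs <;> norm_num

lemma abs_blockAvg_eq (p : Fin n → Fin k) (D : Fin n → Fin n → ℝ) (x y : Fin n) :
    |blockAvg p D x y| = blockSign p
      (fun i j => decide (0 ≤ ∑ u ∈ classOf p i, ∑ v ∈ classOf p j, D u v)) x y *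
        blockAvg p D x y := by
  have hden : (0 : ℝ) < #(classOf p (p x)) * #(classOf p (p y)) := by
    positivity [card_classOf_pos p x, card_classOf_pos p y]
  rw [blockSign, blockAvg_apply]
  by_cases h : 0 ≤ ∑ u ∈ classOf p (p x), ∑ v ∈ classOf p (p y), D u v
  · simp [h, abs_of_nonneg (div_nonneg h hden.le)]
  · simp [h, abs_of_neg (div_neg_of_neg_of_pos (not_le.1 h) hden)]

lemma exists_matrixL1Norm_blockAvg_sub_eq (p : Fin n → Fin k) (M N : Fin n → Fin n → ℝ) :
    ∃ S, matrixL1Norm n (fun x y => blockAvg p M x y - blockAvg p N x y) =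
      1 / (n : ℝ) ^ 2 * ∑ x, ∑ y, blockSign p S x y * (M x y - N x y) := by
  let S i j := decide (0 ≤ ∑ u ∈ classOf p i, ∑ v ∈ classOf p j, (M u v - N u v))
  refine ⟨S, ?_⟩
  simp only [matrixL1Norm, blockAvg_sub, abs_blockAvg_eq]
  exact congrArg _ (sum_mul_blockAvg p (fun i j => if S i j then 1 else -1) _)

lemma matrixL1Norm_blockAvg_sub_le (p : Fin n → Fin k) {M N : Fin n → Fin n → ℝ}
    (hM : ∀ u v, 0 ≤ M u v) (hN : ∀ u v, 0 ≤ N u v) :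
    matrixL1Norm n (fun x y => blockAvg p M x y - blockAvg p N x y) ≤
      1 / (n : ℝ) ^ 2 * (∑ x, ∑ y, M x y + ∑ x, ∑ y, N x y) := by
  have sum_blockAvg (L : Fin n → Fin n → ℝ) : ∑ x, ∑ y, blockAvg p L x y = ∑ x, ∑ y, L x y := by
    simpa using sum_mul_blockAvg p (fun _ _ => 1) L
  rw [matrixL1Norm, ← sum_blockAvg M, ← sum_blockAvg N, ← sum_add_distrib]
  gcongr with x _
  rw [← sum_add_distrib]
  gcongr with y _
  exact (abs_sub _ _).trans_eq <| by
    rw [abs_of_nonneg (blockAvg_nonneg p hM x y), abs_of_nonneg (blockAvg_nonneg p hN x y)]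

end BlockAverage

section BlockDeviation

variable {n : ℕ}

/-- The random variable `ε` of the theorem. -/
noncomputable def blockDeviation (k : ℕ) (M N : Fin n → Fin n → ℝ) : ℝ :=
  ⨆ p : Fin n → Fin k, matrixL1Norm n (fun x y => blockAvg p M x y - blockAvg p N x y)

variable {k : ℕ} {M N : Fin n → Fin n → ℝ}

lemma blockDeviation_nonneg : 0 ≤ blockDeviation k M N :=
  Real.iSup_nonneg fun _ =>
    mul_nonneg (by positivity) (sum_nonneg fun _ _ => sum_nonneg fun _ _ => abs_nonneg _)

lemma blockDeviation_le_sum (hM : ∀ u v, 0 ≤ M u v) (hN : ∀ u v, 0 ≤ N u v) :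
    blockDeviation k M N ≤ 1 / (n : ℝ) ^ 2 * (∑ x, ∑ y, M x y + ∑ x, ∑ y, N x y) :=
  Real.iSup_le (fun p => matrixL1Norm_blockAvg_sub_le p hM hN) <| by
    have := sum_nonneg fun x (_ : x ∈ univ) => sum_nonneg fun y (_ : y ∈ univ) => hM x y
    have := sum_nonneg fun x (_ : x ∈ univ) => sum_nonneg fun y (_ : y ∈ univ) => hN x y
    positivity

lemma blockDeviation_le_of_forall_sum_blockSign_le {t : ℝ} (ht : 0 ≤ t)
    (h : ∀ (p : Fin n → Fin k) S,
      ∑ x, ∑ y, blockSign p S x y * (M x y - N x y) ≤ t * (n : ℝ) ^ 2) :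
    blockDeviation k M N ≤ t := by
  refine Real.iSup_le (fun p => ?_) ht
  obtain ⟨S, hS⟩ := exists_matrixL1Norm_blockAvg_sub_eq p M N
  rw [hS]
  rcases eq_or_ne n 0 with rfl | hn
  · simpa using ht
  · rw [one_div_mul_eq_div, div_le_iff₀ (by positivity)]
    exact h p S

lemma measurable_blockDeviation {Ω : Type*} [MeasurableSpace Ω] {A : Ω → Fin n → Fin n → ℝ}
    (hA : ∀ i j, Measurable fun ω => A ω i j) :
    Measurable fun ω => blockDeviation k (A ω) N := by
  refine Measurable.iSup fun p => ?_
  simp only [matrixL1Norm, blockAvg_apply]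
  fun_prop

end BlockDeviation

lemma sum_subtype_lt {ι : Type*} [Fintype ι] [LinearOrder ι] (g : ι → ι → ℝ) :
    ∑ q : {q : ι × ι // q.1 < q.2}, g q.1.1 q.1.2 = ∑ x, ∑ y, if x < y then g x y else 0 := by
  rw [← Fintype.sum_prod_type', ← sum_filter]
  exact (sum_subtype _ (fun q => by simp) fun q : ι × ι => g q.1 q.2).symm

lemma sum_sum_eq_sum_subtype_lt {ι : Type*} [Fintype ι] [LinearOrder ι] (f : ι → ι → ℝ)
    (hf : ∀ x, f x x = 0) :
    ∑ x, ∑ y, f x y = ∑ q : {q : ι × ι // q.1 < q.2}, (f q.1.1 q.1.2 + f q.1.2 q.1.1) := by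
  have split (x y : ι) : f x y = (if x < y then f x y else 0) + if y < x then f x y else 0 := by
    rcases lt_trichotomy x y with h | rfl | h
    · simp [h, h.not_gt]
    · simp [hf]
    · simp [h, h.not_gt]
  rw [sum_add_distrib, sum_subtype_lt, sum_subtype_lt (fun x y => f y x), sum_comm (f := fun x y =>
    if x < y then f y x else 0), ← sum_add_distrib]
  simp only [← sum_add_distrib, ← split]

section Probability

variable {Ω : Type*} [MeasurableSpace Ω] {μ : Measure Ω}

lemma integral_le_add_mul_measureReal_lt [IsProbabilityMeasure μ] {f : Ω → ℝ}
    (hf : Measurable f) (hf0 : ∀ ω, 0 ≤ f ω) {M t : ℝ} (hfM : ∀ ω, f ω ≤ M) (ht : 0 ≤ t) :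
    ∫ ω, f ω ∂μ ≤ t + M * μ.real {ω | t < f ω} := by
  have hs : MeasurableSet {ω | t < f ω} := measurableSet_lt measurable_const hf
  calc ∫ ω, f ω ∂μ ≤ ∫ ω, (t + {ω | t < f ω}.indicator (fun _ => M) ω) ∂μ := by
        refine integral_mono_of_nonneg (.of_forall hf0)
          ((integrable_const t).add ((integrable_const M).indicator hs)) (.of_forall fun ω => ?_)
        by_cases h : t < f ω
        · simpa [Set.indicator_of_mem (show ω ∈ {ω | t < f ω} from h)] using
            (hfM ω).trans (le_add_of_nonneg_left ht)
        · simpa [h] using not_lt.1 h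
    _ = t + M * μ.real {ω | t < f ω} := by
        rw [integral_add (integrable_const t) ((integrable_const M).indicator hs),
          integral_indicator_const M hs]
        simp [mul_comm]

lemma integral_eq_measureReal_of_zero_or_one {X : Ω → ℝ} (hX : Measurable X)
    (h01 : ∀ ω, X ω = 0 ∨ X ω = 1) : ∫ ω, X ω ∂μ = μ.real {ω | X ω = 1} := by
  have hX_eq : X = {ω | X ω = 1}.indicator 1 := by
    funext ω
    rcases h01 ω with h | h <;> simp [h]
  conv_lhs => rw [hX_eq]
  exact integral_indicator_one (hX (measurableSet_singleton 1))

lemma mgf_sub_le_of_zero_or_one [IsProbabilityMeasure μ] {X : Ω → ℝ} (hX : Measurable X)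
    (h01 : ∀ ω, X ω = 0 ∨ X ω = 1) {v : ℝ} (hv : |v| ≤ 1) :
    mgf (fun ω => X ω - μ.real {ω | X ω = 1}) μ v ≤ exp (v ^ 2 * μ.real {ω | X ω = 1}) := by
  set q := μ.real {ω | X ω = 1}
  have hXint : Integrable X μ :=
    .of_bound hX.aestronglyMeasurable 1 <| .of_forall fun ω => by
      rcases h01 ω with h | h <;> simp [h]
  have affine (ω : Ω) : exp (v * (X ω - q)) = exp (-(v * q)) * (1 + (exp v - 1) * X ω) := by
    rcases h01 ω with h | h
    · simp [h]
    · rw [h, mul_sub, mul_one, sub_eq_add_neg, exp_add]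
      ring
  have hmgf : mgf (fun ω => X ω - q) μ v = exp (-(v * q)) * (1 + (exp v - 1) * q) := by
    simp only [mgf, affine]
    rw [integral_const_mul, integral_add (integrable_const 1) (hXint.const_mul _),
      integral_const_mul, integral_eq_measureReal_of_zero_or_one hX h01]
    simp [q]
  calc mgf (fun ω => X ω - q) μ v = exp (-(v * q)) * (1 + (exp v - 1) * q) := hmgf
    _ ≤ exp (-(v * q)) * exp ((exp v - 1) * q) := by
        gcongr
        linarith [add_one_le_exp ((exp v - 1) * q)]
    _ = exp ((exp v - 1 - v) * q) := by rw [← exp_add]; ring_nf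
    _ ≤ exp (v ^ 2 * q) := by
        gcongr
        exact (le_abs_self _).trans (abs_exp_sub_one_sub_id_le hv)

lemma measureReal_le_exp_of_iIndepFun {ι : Type*} [Fintype ι] {Y : ι → Ω → ℝ}
    (hindep : iIndepFun Y μ) (hmeas : ∀ i, Measurable (Y i)) {C : ℝ} (hbdd : ∀ i ω, Y i ω ≤ C)
    {l : ℝ} (hl : 0 ≤ l) {B : ι → ℝ} (hB : ∀ i, mgf (Y i) μ l ≤ exp (B i)) (t : ℝ) :
    μ.real {ω | t ≤ ∑ i, Y i ω} ≤ exp (∑ i, B i - l * t) := by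
  have := hindep.isProbabilityMeasure
  have hint : Integrable (fun ω => exp (l * ∑ i, Y i ω)) μ := by
    refine .of_bound (by fun_prop) (exp (l * ∑ _i : ι, C)) (.of_forall fun ω => ?_)
    rw [norm_of_nonneg (exp_nonneg _)]
    gcongr with i
    exact hbdd i ω
  have hmgf : mgf (fun ω => ∑ i, Y i ω) μ l ≤ exp (∑ i, B i) := by
    rw [show (fun ω => ∑ i, Y i ω) = ∑ i, Y i by ext; simp, hindep.mgf_sum hmeas, exp_sum]
    exact prod_le_prod (fun i _ => mgf_nonneg) fun i _ => hB i
  calc μ.real {ω | t ≤ ∑ i, Y i ω} ≤ exp (-l * t) * mgf (fun ω => ∑ i, Y i ω) μ l :=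
        measure_ge_le_exp_mul_mgf t hl hint
    _ ≤ exp (-l * t) * exp (∑ i, B i) := by gcongr
    _ = exp (∑ i, B i - l * t) := by rw [← exp_add]; ring_nf

end Probability

lemma exists_chernoff_exponent {S T C : ℝ} (hS : 0 ≤ S) (hC : 0 ≤ C) (hSC : 8 * S * C ≤ T ^ 2)
    (hCT : 4 * C ≤ T) : ∃ l : ℝ, 0 ≤ l ∧ l ≤ 1 / 2 ∧ 2 * l ^ 2 * S - l * T ≤ -C := by
  -- `l = T / (4 S)` minimises `2 l² S - l T`; when it exceeds `1/2`, `l = 1/2` is good enough.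
  by_cases hTS : T ≤ 2 * S
  · rcases hS.eq_or_lt with rfl | hS
    · exact ⟨0, le_rfl, by norm_num, by linarith⟩
    have hT : 0 ≤ T := by linarith
    refine ⟨T / (4 * S), by positivity, by rw [div_le_iff₀ (by positivity)]; linarith, ?_⟩
    have hval : 2 * (T / (4 * S)) ^ 2 * S - T / (4 * S) * T = -(T ^ 2 / (8 * S)) := by
      field_simp
      ring
    rw [hval, neg_le_neg_iff, le_div_iff₀ (by positivity)]
    linarith
  · exact ⟨1 / 2, by norm_num, le_rfl, by linarith⟩

lemma two_mul_exp_neg_le_one_div {x : ℝ} (hx : 0 < x) : 2 * exp (-x) ≤ 1 / x := by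
  have h2e : 2 * exp (-1) ≤ 1 := by
    rw [exp_neg, ← div_eq_mul_inv, div_le_one (exp_pos 1)]
    linarith [add_one_le_exp 1]
  rw [le_div_iff₀ hx]
  linarith [mul_exp_neg_le_exp_neg_one x]

lemma card_partition_sign_mul_exp_neg_le {n k : ℕ} {c : ℝ}
    (hc : n * (1 + log k) + (k : ℝ) ^ 2 ≤ n ^ 2 * c) :
    (Fintype.card ((Fin n → Fin k) × (Fin k → Fin k → Bool)) : ℝ) * exp (-(n ^ 2 * c)) ≤
      exp (-n) := by
  have hpow : (k : ℝ) ^ n ≤ exp (n * log k) := by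
    rcases Nat.eq_zero_or_pos k with rfl | hk
    · simpa using pow_le_one₀ le_rfl zero_le_one
    · rw [exp_nat_mul, exp_log (by positivity)]
  have htwo : (2 : ℝ) ^ (k * k) ≤ exp ((k : ℝ) ^ 2) := by
    rw [sq, ← Nat.cast_mul, ← mul_one ((k * k : ℕ) : ℝ), exp_nat_mul]
    gcongr
    linarith [add_one_le_exp 1]
  simp only [Fintype.card_prod, Fintype.card_fun, Fintype.card_fin, Fintype.card_bool, ← pow_mul,
    Nat.cast_mul, Nat.cast_pow, Nat.cast_ofNat]
  calc (k : ℝ) ^ n * 2 ^ (k * k) * exp (-(n ^ 2 * c))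
      ≤ exp (n * log k) * exp ((k : ℝ) ^ 2) * exp (-(n ^ 2 * c)) := by gcongr
    _ ≤ exp (-n) := by
        simp only [← exp_add]
        gcongr
        linarith

lemma sum_sum_eq_sq_mul_matrixDensity {n : ℕ} (hn : n ≠ 0) (Q : Fin n → Fin n → ℝ) :
    ∑ x, ∑ y, Q x y = (n : ℝ) ^ 2 * matrixDensity n Q := by
  rw [matrixDensity, ← mul_assoc, mul_one_div_cancel (by positivity), one_mul]

noncomputable def blockRate (n k : ℕ) : ℝ :=
  (1 + Real.log k) / n + (k : ℝ) ^ 2 / (n : ℝ) ^ 2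

lemma sq_mul_blockRate {n : ℕ} (hn : n ≠ 0) (k : ℕ) :
    (n : ℝ) ^ 2 * blockRate n k = n * (1 + log k) + (k : ℝ) ^ 2 := by
  rw [blockRate]
  field_simp

lemma one_le_mul_blockRate {n : ℕ} (hn : n ≠ 0) (k : ℕ) : 1 ≤ n * blockRate n k := by
  have := sq_mul_blockRate hn k
  have := log_natCast_nonneg k
  have : (1 : ℝ) ≤ n := by exact_mod_cast Nat.one_le_iff_ne_zero.2 hn
  nlinarith

lemma matrixDensity_le_blockRate {n : ℕ} {Q : Fin n → Fin n → ℝ} (h : n * matrixDensity n Q < 1)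
    (k : ℕ) : matrixDensity n Q ≤ blockRate n k := by
  rcases eq_or_ne n 0 with rfl | hn
  · simp [matrixDensity, blockRate]
  have := one_le_mul_blockRate hn k
  have : (0 : ℝ) < n := by positivity
  nlinarith

lemma one_div_le_sqrt_mul {a x y : ℝ} (ha : 0 < a) (hx : 1 ≤ a * x) (hy : 1 ≤ a * y) :
    1 / a ≤ √(x * y) := by
  have hx' : 1 / a ≤ x := by rw [div_le_iff₀ ha]; linarith
  have hy' : 1 / a ≤ y := by rw [div_le_iff₀ ha]; linarith
  refine le_sqrt_of_sq_le ?_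
  rw [sq]
  exact mul_le_mul hx' hy' (by positivity) (by linarith [one_div_pos.2 ha])

lemma le_mul_sqrt_mul {a x y : ℝ} (ha : 0 ≤ a) (hx : 0 ≤ x) (h : x ≤ a ^ 2 * y) :
    x ≤ a * √(x * y) := by
  rw [← sqrt_sq ha, ← sqrt_mul (sq_nonneg a)]
  refine le_sqrt_of_sq_le ?_
  nlinarith

section RandomGraph

variable {Ω : Type*} [MeasurableSpace Ω] {n : ℕ}

structure IsBernoulliGraph (μ : Measure Ω) (Q : Fin n → Fin n → ℝ)
    (A : Ω → Fin n → Fin n → ℝ) : Prop where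
  prob_symm : ∀ i j, Q i j = Q j i
  prob_mem_Icc : ∀ i j, Q i j ∈ Set.Icc (0 : ℝ) 1
  prob_diag : ∀ i, Q i i = 0
  measurable : ∀ i j, Measurable fun ω => A ω i j
  zero_or_one : ∀ ω i j, A ω i j = 0 ∨ A ω i j = 1
  symm : ∀ ω i j, A ω i j = A ω j i
  diag : ∀ ω i, A ω i i = 0
  iIndepFun : iIndepFun (fun q : {q : Fin n × Fin n // q.1 < q.2} => fun ω => A ω q.1.1 q.1.2) μ
  measure_eq_one : ∀ i j, i < j → μ {ω | A ω i j = 1} = ENNReal.ofReal (Q i j)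

namespace IsBernoulliGraph

variable {μ : Measure Ω} {Q : Fin n → Fin n → ℝ} {A : Ω → Fin n → Fin n → ℝ}

lemma nonneg (G : IsBernoulliGraph μ Q A) (ω : Ω) (i j : Fin n) : 0 ≤ A ω i j := by
  rcases G.zero_or_one ω i j with h | h <;> simp [h]

lemma le_one (G : IsBernoulliGraph μ Q A) (ω : Ω) (i j : Fin n) : A ω i j ≤ 1 := by
  rcases G.zero_or_one ω i j with h | h <;> simp [h]

lemma measureReal_eq_one (G : IsBernoulliGraph μ Q A) {i j : Fin n} (h : i < j) :
    μ.real {ω | A ω i j = 1} = Q i j := by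
  rw [measureReal_def, G.measure_eq_one i j h, ENNReal.toReal_ofReal (G.prob_mem_Icc i j).1]

lemma integral_eq (G : IsBernoulliGraph μ Q A) (i j : Fin n) : ∫ ω, A ω i j ∂μ = Q i j := by
  have lt (i j : Fin n) (h : i < j) : ∫ ω, A ω i j ∂μ = Q i j := by
    rw [integral_eq_measureReal_of_zero_or_one (G.measurable i j) (G.zero_or_one · i j),
      G.measureReal_eq_one h]
  rcases lt_trichotomy i j with h | rfl | h
  · exact lt i j h
  · simp [G.diag, G.prob_diag]
  · simpa only [G.symm _ i, G.prob_symm i] using lt j i h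

lemma sum_sum_mul_sub_eq (G : IsBernoulliGraph μ Q A) (w : Fin n → Fin n → ℝ) (ω : Ω) :
    ∑ x, ∑ y, w x y * (A ω x y - Q x y) = ∑ q : {q : Fin n × Fin n // q.1 < q.2},
      (w q.1.1 q.1.2 + w q.1.2 q.1.1) * (A ω q.1.1 q.1.2 - Q q.1.1 q.1.2) := by
  rw [sum_sum_eq_sum_subtype_lt _ fun x => by simp [G.diag, G.prob_diag]]
  simp only [G.symm ω _ _, G.prob_symm _ _, add_mul]

lemma abs_sub_le_one (G : IsBernoulliGraph μ Q A) (ω : Ω) (i j : Fin n) :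
    |A ω i j - Q i j| ≤ 1 :=
  abs_le.2 ⟨by linarith [G.nonneg ω i j, (G.prob_mem_Icc i j).2],
    by linarith [G.le_one ω i j, (G.prob_mem_Icc i j).1]⟩

lemma mgf_mul_sub_le (G : IsBernoulliGraph μ Q A) {i j : Fin n} (hij : i < j) {c l : ℝ}
    (hc : |c| ≤ 2) (hl0 : 0 ≤ l) (hl : l ≤ 1 / 2) :
    mgf (fun ω => c * (A ω i j - Q i j)) μ l ≤ exp (4 * l ^ 2 * Q i j) := by
  have := G.iIndepFun.isProbabilityMeasure
  have hcl : |c * l| ≤ 1 := by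
    rw [abs_mul, abs_of_nonneg hl0]
    nlinarith [abs_nonneg c]
  rw [mgf_const_mul, ← G.measureReal_eq_one hij]
  refine (mgf_sub_le_of_zero_or_one (G.measurable i j) (G.zero_or_one · i j) hcl).trans ?_
  have hc2 : c ^ 2 ≤ 2 ^ 2 := sq_le_sq' (abs_le.1 hc).1 (abs_le.1 hc).2
  gcongr
  rw [mul_pow]
  nlinarith [sq_nonneg l]

lemma sum_sum_prob_eq (G : IsBernoulliGraph μ Q A) :
    ∑ x, ∑ y, Q x y = ∑ q : {q : Fin n × Fin n // q.1 < q.2}, 2 * Q q.1.1 q.1.2 := by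
  simp only [sum_sum_eq_sum_subtype_lt Q G.prob_diag, G.prob_symm _ _, two_mul]

lemma measureReal_sum_mul_sub_ge_le (G : IsBernoulliGraph μ Q A) {w : Fin n → Fin n → ℝ}
    (hw : ∀ x y, |w x y| ≤ 1) {l : ℝ} (hl0 : 0 ≤ l) (hl : l ≤ 1 / 2) (T : ℝ) :
    μ.real {ω | T ≤ ∑ x, ∑ y, w x y * (A ω x y - Q x y)} ≤
      exp (2 * l ^ 2 * ∑ x, ∑ y, Q x y - l * T) := by
  set c : {q : Fin n × Fin n // q.1 < q.2} → ℝ := fun q => w q.1.1 q.1.2 + w q.1.2 q.1.1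
  have hc (q) : |c q| ≤ 2 :=
    (abs_add_le _ _).trans (by linarith [hw q.1.1 q.1.2, hw q.1.2 q.1.1])
  have hbdd (q : {q : Fin n × Fin n // q.1 < q.2}) (ω : Ω) :
      c q * (A ω q.1.1 q.1.2 - Q q.1.1 q.1.2) ≤ 2 :=
    calc _ ≤ |c q| * |A ω q.1.1 q.1.2 - Q q.1.1 q.1.2| := (le_abs_self _).trans (abs_mul _ _).le
      _ ≤ 2 * 1 := mul_le_mul (hc q) (G.abs_sub_le_one ω _ _) (abs_nonneg _) zero_le_two
      _ = 2 := mul_one 2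
  simp only [G.sum_sum_mul_sub_eq w]
  calc _ ≤ exp (∑ q : {q : Fin n × Fin n // q.1 < q.2}, 4 * l ^ 2 * Q q.1.1 q.1.2 - l * T) :=
        measureReal_le_exp_of_iIndepFun
          (G.iIndepFun.comp (fun q v => c q * (v - Q q.1.1 q.1.2)) fun q => by fun_prop)
          (fun q => (G.measurable _ _).sub_const _ |>.const_mul _) hbdd hl0
          (fun q => G.mgf_mul_sub_le q.2 (hc q) hl0 hl) T
    _ = exp (2 * l ^ 2 * ∑ x, ∑ y, Q x y - l * T) := by
        rw [G.sum_sum_prob_eq, mul_sum]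
        congr 2
        exact sum_congr rfl fun q _ => by ring

lemma measureReal_sum_mul_sub_ge_le_exp_neg (G : IsBernoulliGraph μ Q A)
    {w : Fin n → Fin n → ℝ} (hw : ∀ x y, |w x y| ≤ 1) {T C : ℝ} (hC : 0 ≤ C)
    (hSC : 8 * (∑ x, ∑ y, Q x y) * C ≤ T ^ 2) (hCT : 4 * C ≤ T) :
    μ.real {ω | T ≤ ∑ x, ∑ y, w x y * (A ω x y - Q x y)} ≤ exp (-C) := by
  obtain ⟨l, hl0, hl, hexp⟩ := exists_chernoff_exponent
    (sum_nonneg fun x _ => sum_nonneg fun y _ => (G.prob_mem_Icc x y).1) hC hSC hCT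
  exact (G.measureReal_sum_mul_sub_ge_le hw hl0 hl T).trans (exp_le_exp.2 hexp)

lemma blockDeviation_le_two (G : IsBernoulliGraph μ Q A) (k : ℕ) (ω : Ω) :
    blockDeviation k (A ω) Q ≤ 2 := by
  have hsum {M : Fin n → Fin n → ℝ} (hM : ∀ x y, M x y ≤ 1) : ∑ x, ∑ y, M x y ≤ (n : ℝ) ^ 2 := by
    calc ∑ x, ∑ y, M x y ≤ ∑ _x : Fin n, ∑ _y : Fin n, (1 : ℝ) := by
          gcongr with x _ y _
          exact hM x y
      _ = (n : ℝ) ^ 2 := by simp [sq]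
  calc blockDeviation k (A ω) Q ≤ 1 / (n : ℝ) ^ 2 * (∑ x, ∑ y, A ω x y + ∑ x, ∑ y, Q x y) :=
        blockDeviation_le_sum (G.nonneg ω) fun x y => (G.prob_mem_Icc x y).1
    _ ≤ 1 / (n : ℝ) ^ 2 * (2 * (n : ℝ) ^ 2) := by
        gcongr
        linarith [hsum (G.le_one ω), hsum fun x y => (G.prob_mem_Icc x y).2]
    _ ≤ 2 := by
        rcases eq_or_ne n 0 with rfl | hn
        · norm_num
        · field_simp
          rfl

lemma integral_blockDeviation_le_two_mul_matrixDensity [IsProbabilityMeasure μ]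
    (G : IsBernoulliGraph μ Q A) (k : ℕ) :
    ∫ ω, blockDeviation k (A ω) Q ∂μ ≤ 2 * matrixDensity n Q := by
  have hint (x y : Fin n) : Integrable (fun ω => A ω x y) μ :=
    .of_bound (G.measurable x y).aestronglyMeasurable 1 <| .of_forall fun ω => by
      rw [Real.norm_of_nonneg (G.nonneg ω x y)]
      exact G.le_one ω x y
  have hint_sum : Integrable (fun ω => ∑ x, ∑ y, A ω x y) μ :=
    integrable_finsetSum _ fun x _ => integrable_finsetSum _ fun y _ => hint x y
  have hmean : ∫ ω, ∑ x, ∑ y, A ω x y ∂μ = ∑ x, ∑ y, Q x y := by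
    simp only [integral_finsetSum _ fun x _ => integrable_finsetSum _ fun y _ => hint x y,
      integral_finsetSum _ fun y _ => hint _ y, G.integral_eq]
  calc ∫ ω, blockDeviation k (A ω) Q ∂μ
      ≤ ∫ ω, 1 / (n : ℝ) ^ 2 * (∑ x, ∑ y, A ω x y + ∑ x, ∑ y, Q x y) ∂μ :=
        integral_mono_of_nonneg (.of_forall fun _ => blockDeviation_nonneg)
          ((hint_sum.add (integrable_const _)).const_mul _)
          (.of_forall fun ω => blockDeviation_le_sum (G.nonneg ω) fun x y => (G.prob_mem_Icc x y).1)
    _ = 2 * matrixDensity n Q := by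
        rw [integral_const_mul, integral_add hint_sum (integrable_const _), hmean, integral_const,
          probReal_univ, one_smul, matrixDensity]
        ring

/-- When the density is small compared to `c`, the crude bound by the total edge count suffices:
only the single event that the graph has too many edges is excluded. -/
lemma measureReal_blockDeviation_gt_le_of_le (G : IsBernoulliGraph μ Q A) (k : ℕ) {c : ℝ}
    (hρ : 1 ≤ n * matrixDensity n Q) (hc : 1 ≤ n * c) (hρc : matrixDensity n Q ≤ 4 * c) :
    μ.real {ω | 8 * √(matrixDensity n Q * c) < blockDeviation k (A ω) Q} ≤ exp (-n) := by
  have := G.iIndepFun.isProbabilityMeasure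
  set ρ := matrixDensity n Q
  set s := √(ρ * c)
  have hn : n ≠ 0 := by rintro rfl; norm_num at hρ
  have hn0 : (0 : ℝ) < n := by positivity
  have hρ0 : 0 < ρ := pos_of_mul_pos_right (by linarith) hn0.le
  have hsn : 1 / (n : ℝ) ≤ s := one_div_le_sqrt_mul hn0 hρ hc
  have hs_sq : s ^ 2 = ρ * c := sq_sqrt (by nlinarith)
  have hρs : ρ ≤ 2 * s := le_mul_sqrt_mul zero_le_two hρ0.le (by linarith)
  have hSQ := sum_sum_eq_sq_mul_matrixDensity hn Q
  have hsub : {ω | 8 * s < blockDeviation k (A ω) Q} ⊆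
      {ω | 4 * s * (n : ℝ) ^ 2 ≤ ∑ x, ∑ y, 1 * (A ω x y - Q x y)} := by
    intro ω hω
    have hdev := hω.out.trans_le
      (blockDeviation_le_sum (G.nonneg ω) fun x y => (G.prob_mem_Icc x y).1)
    rw [hSQ, show ∀ a : ℝ, 1 / (n : ℝ) ^ 2 * (a + n ^ 2 * ρ) = a / n ^ 2 + ρ from
      fun a => by field_simp, ← sub_lt_iff_lt_add, lt_div_iff₀ (by positivity)] at hdev
    simp only [Set.mem_ofPred_eq, one_mul, sum_sub_distrib, hSQ]
    nlinarith
  rw [div_le_iff₀ hn0] at hsn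
  refine (measureReal_mono hsub).trans <| G.measureReal_sum_mul_sub_ge_le_exp_neg
    (fun _ _ => by simp) n.cast_nonneg ?_ ?_
  · rw [hSQ]
    have : 0 ≤ 8 * ρ * n ^ 3 * (2 * (n * c) - 1) :=
      mul_nonneg (by positivity) (by linarith)
    linear_combination this - 16 * n ^ 4 * hs_sq
  · linear_combination (4 * n) * hsn

/-- When the density dominates `c`, a union bound over all partitions `p` and all sign
patterns `S` of `∑ blockSign p S * (A - Q)` works; `c` pays for the `kⁿ 2^(k²)` events. -/
lemma measureReal_blockDeviation_gt_le_of_ge (G : IsBernoulliGraph μ Q A) {k : ℕ} {c : ℝ}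
    (hn : n ≠ 0) (hc : n * (1 + log k) + (k : ℝ) ^ 2 ≤ n ^ 2 * c)
    (hcρ : c ≤ 4 * matrixDensity n Q) :
    μ.real {ω | 8 * √(matrixDensity n Q * c) < blockDeviation k (A ω) Q} ≤ exp (-n) := by
  have := G.iIndepFun.isProbabilityMeasure
  set ρ := matrixDensity n Q
  set s := √(ρ * c)
  have hn0 : (0 : ℝ) < n := by positivity
  have hc0 : 0 ≤ c := by
    have := log_natCast_nonneg k
    nlinarith
  have hs_sq : s ^ 2 = ρ * c := sq_sqrt (by nlinarith)
  have hcs : c ≤ 2 * s := by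
    simpa only [s, mul_comm ρ] using le_mul_sqrt_mul zero_le_two hc0 (by linarith)
  have hSQ := sum_sum_eq_sq_mul_matrixDensity hn Q
  have hsub : {ω | 8 * s < blockDeviation k (A ω) Q} ⊆
      ⋃ i : (Fin n → Fin k) × (Fin k → Fin k → Bool),
        {ω | 8 * s * (n : ℝ) ^ 2 ≤ ∑ x, ∑ y, blockSign i.1 i.2 x y * (A ω x y - Q x y)} := by
    intro ω hω
    by_contra h
    simp only [Set.mem_iUnion, Set.mem_ofPred_eq, not_exists, not_le] at h
    exact hω.out.not_ge <| blockDeviation_le_of_forall_sum_blockSign_le (by positivity)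
      fun p S => (h (p, S)).le
  calc μ.real {ω | 8 * s < blockDeviation k (A ω) Q}
      ≤ ∑ i : (Fin n → Fin k) × (Fin k → Fin k → Bool),
          μ.real {ω | 8 * s * (n : ℝ) ^ 2 ≤ ∑ x, ∑ y, blockSign i.1 i.2 x y * (A ω x y - Q x y)} :=
        (measureReal_mono hsub).trans (measureReal_iUnion_fintype_le _)
    _ ≤ ∑ _i : (Fin n → Fin k) × (Fin k → Fin k → Bool), exp (-(n ^ 2 * c)) :=
        sum_le_sum fun i _ => G.measureReal_sum_mul_sub_ge_le_exp_neg
          (abs_blockSign_le_one i.1 i.2) (by positivity)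
          (by rw [hSQ]; linear_combination 56 * n ^ 4 * sq_nonneg s - 8 * n ^ 4 * hs_sq)
          (by linear_combination 4 * n ^ 2 * hcs)
    _ ≤ exp (-n) := by
        rw [sum_const, card_univ, nsmul_eq_mul]
        exact card_partition_sign_mul_exp_neg_le hc

lemma measureReal_blockDeviation_gt_le (G : IsBernoulliGraph μ Q A) (k : ℕ)
    (hρ : 1 ≤ n * matrixDensity n Q) :
    μ.real {ω | 8 * √(matrixDensity n Q * blockRate n k) < blockDeviation k (A ω) Q} ≤
      exp (-n) := by
  have hn : n ≠ 0 := by rintro rfl; norm_num at hρ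
  have hc := one_le_mul_blockRate hn k
  rcases le_or_gt (matrixDensity n Q) (4 * blockRate n k) with h | h
  · exact G.measureReal_blockDeviation_gt_le_of_le k hρ hc h
  · have : (0 : ℝ) < n := by positivity
    exact G.measureReal_blockDeviation_gt_le_of_ge hn (sq_mul_blockRate hn k).ge (by nlinarith)

lemma integral_blockDeviation_le [IsProbabilityMeasure μ] (G : IsBernoulliGraph μ Q A) (k : ℕ) :
    ∫ ω, blockDeviation k (A ω) Q ∂μ ≤ 9 * √(matrixDensity n Q * blockRate n k) := by
  set s := √(matrixDensity n Q * blockRate n k)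
  by_cases hρ : 1 ≤ n * matrixDensity n Q
  · have hn : n ≠ 0 := by rintro rfl; norm_num at hρ
    have hsn : 1 / (n : ℝ) ≤ s := one_div_le_sqrt_mul (by positivity) hρ (one_le_mul_blockRate hn k)
    calc ∫ ω, blockDeviation k (A ω) Q ∂μ
        ≤ 8 * s + 2 * μ.real {ω | 8 * s < blockDeviation k (A ω) Q} :=
          integral_le_add_mul_measureReal_lt (measurable_blockDeviation G.measurable)
            (fun _ => blockDeviation_nonneg) (G.blockDeviation_le_two k) (by positivity)
      _ ≤ 8 * s + 2 * exp (-n) := by grw [G.measureReal_blockDeviation_gt_le k hρ]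
      _ ≤ 9 * s := by linarith [two_mul_exp_neg_le_one_div (x := n) (by positivity)]
  · have hρc := matrixDensity_le_blockRate (not_le.1 hρ) k
    have hρ0 : 0 ≤ matrixDensity n Q := mul_nonneg (by positivity) <|
      sum_nonneg fun x _ => sum_nonneg fun y _ => (G.prob_mem_Icc x y).1
    calc ∫ ω, blockDeviation k (A ω) Q ∂μ ≤ 2 * matrixDensity n Q :=
          G.integral_blockDeviation_le_two_mul_matrixDensity k
      _ ≤ 2 * (1 * s) := by gcongr; exact le_mul_sqrt_mul zero_le_one hρ0 (by linarith)
      _ ≤ 9 * s := by linarith [sqrt_nonneg (matrixDensity n Q * blockRate n k)]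

lemma measure_blockDeviation_le [IsProbabilityMeasure μ] (G : IsBernoulliGraph μ Q A) (k : ℕ)
    (hρ : 1 ≤ n * matrixDensity n Q) :
    ENNReal.ofReal (1 - exp (-n)) ≤
      μ {ω | blockDeviation k (A ω) Q ≤ 8 * √(matrixDensity n Q * blockRate n k)} := by
  set t := 8 * √(matrixDensity n Q * blockRate n k)
  have hmeas : MeasurableSet {ω | blockDeviation k (A ω) Q ≤ t} :=
    measurableSet_le (measurable_blockDeviation G.measurable) measurable_const
  have hcompl : {ω | blockDeviation k (A ω) Q ≤ t}ᶜ = {ω | t < blockDeviation k (A ω) Q} := by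
    ext
    simp
  have hbad := G.measureReal_blockDeviation_gt_le k hρ
  rw [← hcompl, measureReal_compl hmeas, probReal_univ] at hbad
  rw [ENNReal.ofReal_le_iff_le_toReal (measure_ne_top _ _), ← measureReal_def]
  linarith

end IsBernoulliGraph

end RandomGraph

theorem blockAvg_concentration_general
    {Ω : Type*} [MeasurableSpace Ω] (μ : Measure Ω) [IsProbabilityMeasure μ]
    (n k : ℕ)
    (Q : Fin n → Fin n → ℝ)
    (hQsymm : ∀ i j, Q i j = Q j i)
    (hQmem : ∀ i j, Q i j ∈ Set.Icc (0 : ℝ) 1)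
    (hQdiag : ∀ i, Q i i = 0)
    (A : Ω → Fin n → Fin n → ℝ)
    (hAmeas : ∀ i j, Measurable (fun ω => A ω i j))
    (hAval : ∀ ω i j, A ω i j = 0 ∨ A ω i j = 1)
    (hAsymm : ∀ ω i j, A ω i j = A ω j i)
    (hAdiag : ∀ ω i, A ω i i = 0)
    (hAindep : iIndepFun
      (fun p : {p : Fin n × Fin n // p.1 < p.2} => fun ω => A ω p.1.1 p.1.2) μ)
    (hAprob : ∀ i j, i < j → μ {ω | A ω i j = 1} = ENNReal.ofReal (Q i j)) :
    (∫ ω, (⨆ p : Fin n → Fin k,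
        matrixL1Norm n (fun x y => blockAvg p (A ω) x y - blockAvg p Q x y)) ∂μ ≤
      9 * Real.sqrt (matrixDensity n Q *
        ((1 + Real.log k) / n + (k : ℝ) ^ 2 / (n : ℝ) ^ 2))) ∧
    (1 ≤ (n : ℝ) * matrixDensity n Q →
      ENNReal.ofReal (1 - Real.exp (-(n : ℝ))) ≤
        μ {ω | (⨆ p : Fin n → Fin k,
            matrixL1Norm n (fun x y => blockAvg p (A ω) x y - blockAvg p Q x y)) ≤
          8 * Real.sqrt (matrixDensity n Q *
            ((1 + Real.log k) / n + (k : ℝ) ^ 2 / (n : ℝ) ^ 2))}) := by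
  have G : IsBernoulliGraph μ Q A :=
    ⟨hQsymm, hQmem, hQdiag, hAmeas, hAval, hAsymm, hAdiag, hAindep, hAprob⟩
  exact ⟨G.integral_blockDeviation_le k, G.measure_blockDeviation_le k⟩

/-- Concentration of block averages for `A = Bern(Q)`:
with `ε = max_{π : [n]→[k]} ‖A_π - Q_π‖₁`, we have
`E[ε] ≤ 9 √(ρ(Q)((1+log k)/n + k²/n²))`, and if `nρ(Q) ≥ 1` then
`ε ≤ 8 √(ρ(Q)((1+log k)/n + k²/n²))` with probability at least `1 - e^{-n}`. -/
theorem blockAvg_concentration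
    {Ω : Type*} [MeasurableSpace Ω] (μ : Measure Ω) [IsProbabilityMeasure μ]
    (n k : ℕ) (hk : 1 ≤ k) (hkn : k ≤ n)
    (Q : Fin n → Fin n → ℝ)
    (hQsymm : ∀ i j, Q i j = Q j i)
    (hQmem : ∀ i j, Q i j ∈ Set.Icc (0 : ℝ) 1)
    (hQdiag : ∀ i, Q i i = 0)
    (A : Ω → Fin n → Fin n → ℝ)
    (hAmeas : ∀ i j, Measurable (fun ω => A ω i j))
    (hAval : ∀ ω i j, A ω i j = 0 ∨ A ω i j = 1)
    (hAsymm : ∀ ω i j, A ω i j = A ω j i)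
    (hAdiag : ∀ ω i, A ω i i = 0)
    (hAindep : iIndepFun
      (fun p : {p : Fin n × Fin n // p.1 < p.2} => fun ω => A ω p.1.1 p.1.2) μ)
    (hAprob : ∀ i j, i < j → μ {ω | A ω i j = 1} = ENNReal.ofReal (Q i j)) :
    (∫ ω, (⨆ p : Fin n → Fin k,
        matrixL1Norm n (fun x y => blockAvg p (A ω) x y - blockAvg p Q x y)) ∂μ ≤
      9 * Real.sqrt (matrixDensity n Q *
        ((1 + Real.log k) / n + (k : ℝ) ^ 2 / (n : ℝ) ^ 2))) ∧
    (1 ≤ (n : ℝ) * matrixDensity n Q →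
      ENNReal.ofReal (1 - Real.exp (-(n : ℝ))) ≤
        μ {ω | (⨆ p : Fin n → Fin k,
            matrixL1Norm n (fun x y => blockAvg p (A ω) x y - blockAvg p Q x y)) ≤
          8 * Real.sqrt (matrixDensity n Q *
            ((1 + Real.log k) / n + (k : ℝ) ^ 2 / (n : ℝ) ^ 2))}) :=
  blockAvg_concentration_general μ n k Q hQsymm hQmem hQdiag A hAmeas hAval hAsymm hAdiag hAindep
    hAprob
end

section
/- Let W be a graphon on Λ = [-R,R]^d with the uniform probability measure, satisfying |W(x,y) − W(x',y)| ≤ C|x − x'|_∞^α and ‖W‖₁ = 1, and set D = 1 + 2C(2R)^α. Then for every p ≥ 1 and κ > 0, the oracle error ε^{(p)}_{≥κ}(W) = inf over block models W' with all class probabilities at least κ of δ_p(W, W') satisfies ε^{(p)}_{≥κ}(W) ≤ 4D·κ^{α/d}. -/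
/-!
Cut the box `[-R,R]^d` into `n^d` congruent subcubes with `n = ⌊κ^(-1/d)⌋`, so each cube has
mass `n^(-d) ≥ κ` while its half-side `R/n` is at most `2R κ^(1/d)`. Couple each point with
the index of its cube and give the block model the values of `W` at pairs of cube centres.
Hölder continuity in the first variable, and by symmetry in the second, bounds
`|W(x,y) - W(c_x,c_y)|` pointwise by `2C(R/n)^α`, hence also in `L^p` for the coupling.
-/

open MeasureTheory Set ProbabilityTheory

section IntervalGrid

variable {a b t : ℝ} {n : ℕ} [NeZero n]

/-- The clamp `min · (n - 1)` puts the right endpoint `b` into the last cell. -/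
noncomputable def intervalCellIndex (a b : ℝ) (n : ℕ) [NeZero n] (t : ℝ) : Fin n :=
  ⟨min ⌊(t - a) / ((b - a) / n)⌋₊ (n - 1),
    (min_le_right _ _).trans_lt (Nat.sub_lt (NeZero.pos n) one_pos)⟩

noncomputable def intervalCellCenter (a b : ℝ) (n : ℕ) (i : Fin n) : ℝ :=
  a + (i + 1 / 2) * ((b - a) / n)

theorem measurable_intervalCellIndex : Measurable (intervalCellIndex a b n) :=
  (measurable_from_nat (f := fun k : ℕ => (⟨min k (n - 1),
    (min_le_right _ _).trans_lt (Nat.sub_lt (NeZero.pos n) one_pos)⟩ : Fin n))).comp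
    (Nat.measurable_floor.comp (by fun_prop))

theorem intervalCellIndex_mem_Icc (hab : a < b) (ht : t ∈ Icc a b) :
    t ∈ Icc (a + intervalCellIndex a b n t * ((b - a) / n))
      (a + (intervalCellIndex a b n t + 1) * ((b - a) / n)) := by
  have hh : 0 < (b - a) / n := div_pos (sub_pos.2 hab) (Nat.cast_pos.2 (NeZero.pos n))
  set k := ⌊(t - a) / ((b - a) / n)⌋₊
  have h0 : 0 ≤ (t - a) / ((b - a) / n) := div_nonneg (sub_nonneg.2 ht.1) hh.le
  have hn : (t - a) / ((b - a) / n) ≤ n := by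
    rw [div_le_iff₀ hh, mul_div_cancel₀ _ (Nat.cast_ne_zero.2 (NeZero.ne n))]
    linarith [ht.2]
  have hsucc : ((min k (n - 1) : ℕ) : ℝ) + 1 = min ((k : ℝ) + 1) n := by
    have : min k (n - 1) + 1 = min (k + 1) n := by have := NeZero.pos n; omega
    exact_mod_cast this
  have hlo : ((min k (n - 1) : ℕ) : ℝ) ≤ (t - a) / ((b - a) / n) :=
    (Nat.cast_le.2 (min_le_left _ _)).trans (Nat.floor_le h0)
  have hhi : (t - a) / ((b - a) / n) ≤ ((min k (n - 1) : ℕ) : ℝ) + 1 :=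
    hsucc ▸ le_min (Nat.lt_floor_add_one _).le hn
  rw [le_div_iff₀ hh] at hlo
  rw [div_le_iff₀ hh] at hhi
  rw [show ((intervalCellIndex a b n t : ℕ) : ℝ) = ((min k (n - 1) : ℕ) : ℝ) from rfl]
  exact ⟨by linarith, by linarith⟩

theorem intervalCellIndex_eq_of_mem_Ico (hab : a < b) {m : Fin n}
    (ht : t ∈ Ico (a + m * ((b - a) / n)) (a + (m + 1) * ((b - a) / n))) :
    intervalCellIndex a b n t = m := by
  have hh : 0 < (b - a) / n := div_pos (sub_pos.2 hab) (Nat.cast_pos.2 (NeZero.pos n))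
  have hk : ⌊(t - a) / ((b - a) / n)⌋₊ = m := by
    rw [Nat.floor_eq_iff (div_nonneg (by nlinarith [ht.1, m.val.cast_nonneg (α := ℝ)]) hh.le),
      le_div_iff₀ hh, div_lt_iff₀ hh]
    exact ⟨by linarith [ht.1], by linarith [ht.2]⟩
  ext
  simp only [intervalCellIndex, hk]
  exact min_eq_left (Nat.le_sub_one_of_lt m.2)

theorem volume_Icc_inter_intervalCellIndex_preimage (hab : a < b) (m : Fin n) :
    volume (Icc a b ∩ intervalCellIndex a b n ⁻¹' {m}) = ENNReal.ofReal ((b - a) / n) := by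
  have hh : 0 < (b - a) / n := div_pos (sub_pos.2 hab) (Nat.cast_pos.2 (NeZero.pos n))
  have hmn : (m : ℝ) + 1 ≤ n := by exact_mod_cast m.2
  have hnh : (n : ℝ) * ((b - a) / n) = b - a :=
    mul_div_cancel₀ _ (Nat.cast_ne_zero.2 (NeZero.ne n))
  have hlower : Ico (a + m * ((b - a) / n)) (a + (m + 1) * ((b - a) / n)) ⊆
      Icc a b ∩ intervalCellIndex a b n ⁻¹' {m} := fun t ht =>
    ⟨⟨by nlinarith [ht.1, m.val.cast_nonneg (α := ℝ)], by nlinarith [ht.2]⟩,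
      intervalCellIndex_eq_of_mem_Ico hab ht⟩
  have hupper : Icc a b ∩ intervalCellIndex a b n ⁻¹' {m} ⊆
      Icc (a + m * ((b - a) / n)) (a + (m + 1) * ((b - a) / n)) := by
    rintro t ⟨ht, rfl⟩
    exact intervalCellIndex_mem_Icc hab ht
  refine le_antisymm ((measure_mono hupper).trans_eq ?_) (le_of_eq_of_le ?_ (measure_mono hlower))
  · rw [Real.volume_Icc]; ring_nf
  · rw [Real.volume_Ico]; ring_nf

theorem intervalCellCenter_mem_Icc (hab : a ≤ b) (i : Fin n) :
    intervalCellCenter a b n i ∈ Icc a b := by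
  have hin : (i : ℝ) + 1 ≤ n := by exact_mod_cast i.2
  have hnh : (n : ℝ) * ((b - a) / n) = b - a :=
    mul_div_cancel₀ _ (Nat.cast_ne_zero.2 (NeZero.ne n))
  constructor <;> simp only [intervalCellCenter] <;> nlinarith [i.val.cast_nonneg (α := ℝ)]

theorem abs_sub_intervalCellCenter_le (hab : a < b) (ht : t ∈ Icc a b) :
    |t - intervalCellCenter a b n (intervalCellIndex a b n t)| ≤ (b - a) / (2 * n) := by
  have h := intervalCellIndex_mem_Icc (n := n) hab ht
  have hhalf : (b - a) / (2 * n) = (b - a) / n / 2 := by ring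
  rw [abs_le, hhalf, intervalCellCenter]
  constructor <;> linarith [h.1, h.2]

end IntervalGrid

section CubeGrid

variable {ι : Type*} {a b : ℝ} {n : ℕ} [NeZero n]

noncomputable def cubeIndex (a b : ℝ) (n : ℕ) [NeZero n] (x : ι → ℝ) : ι → Fin n :=
  fun i => intervalCellIndex a b n (x i)

noncomputable def cubeCenter (a b : ℝ) (n : ℕ) (j : ι → Fin n) : ι → ℝ :=
  fun i => intervalCellCenter a b n (j i)

theorem measurable_cubeIndex : Measurable (cubeIndex (ι := ι) a b n) :=
  measurable_pi_lambda _ fun i => measurable_intervalCellIndex.comp (measurable_pi_apply i)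

theorem cubeCenter_mem_Icc (hab : a ≤ b) (j : ι → Fin n) :
    cubeCenter a b n j ∈ Icc (fun _ => a) (fun _ => b) :=
  ⟨fun i => (intervalCellCenter_mem_Icc hab (j i)).1,
    fun i => (intervalCellCenter_mem_Icc hab (j i)).2⟩

variable [Fintype ι]

theorem norm_sub_cubeCenter_cubeIndex_le (hab : a < b) {x : ι → ℝ}
    (hx : x ∈ Icc (fun _ => a) (fun _ => b)) :
    ‖x - cubeCenter a b n (cubeIndex a b n x)‖ ≤ (b - a) / (2 * n) :=
  (pi_norm_le_iff_of_nonneg (by positivity)).2 fun i =>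
    abs_sub_intervalCellCenter_le hab ⟨hx.1 i, hx.2 i⟩

theorem volume_Icc_inter_cubeIndex_preimage (hab : a < b) (j : ι → Fin n) :
    volume (Icc (fun _ => a) (fun _ => b) ∩ cubeIndex a b n ⁻¹' {j}) =
      ENNReal.ofReal ((b - a) / n) ^ Fintype.card ι := by
  have hpi : Icc (fun _ => a) (fun _ => b) ∩ cubeIndex a b n ⁻¹' {j} =
      univ.pi fun i => Icc a b ∩ intervalCellIndex a b n ⁻¹' {j i} := by
    ext x
    simp only [mem_inter_iff, mem_Icc, Pi.le_def, mem_preimage, mem_singleton_iff, funext_iff,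
      cubeIndex, mem_univ_pi, forall_and]
  simp [hpi, volume_pi_pi, volume_Icc_inter_intervalCellIndex_preimage hab]

theorem isProbabilityMeasure_cond_volume_Icc (hab : a < b) :
    IsProbabilityMeasure (volume[|Icc (fun _ : ι => a) (fun _ => b)]) := by
  refine cond_isProbabilityMeasure_of_finite ?_ isCompact_Icc.measure_lt_top.ne
  simp [Real.volume_Icc_pi, hab]

theorem cond_volume_cubeIndex_preimage (hab : a < b) (j : ι → Fin n) :
    volume[cubeIndex a b n ⁻¹' {j} | Icc (fun _ => a) (fun _ => b)] =
      ENNReal.ofReal ((n : ℝ) ^ Fintype.card ι)⁻¹ := by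
  have hba : 0 < b - a := sub_pos.2 hab
  rw [cond_apply measurableSet_Icc, volume_Icc_inter_cubeIndex_preimage hab, Real.volume_Icc_pi]
  simp only [Finset.prod_const, Finset.card_univ]
  rw [← ENNReal.ofReal_pow hba.le, ← ENNReal.ofReal_pow (by positivity),
    ← ENNReal.ofReal_inv_of_pos (by positivity), ← ENNReal.ofReal_mul (by positivity), div_pow,
    ← mul_div_assoc, inv_mul_cancel₀ (by positivity), one_div]

theorem abs_sub_cubeCenter_le_of_holder {W : (ι → ℝ) → (ι → ℝ) → ℝ} {C α : ℝ} (hab : a < b)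
    (hC : 0 ≤ C) (hα : 0 ≤ α) (hsymm : ∀ x y, W x y = W y x)
    (hW : ∀ x ∈ Icc (fun _ => a) (fun _ => b), ∀ x' ∈ Icc (fun _ => a) (fun _ => b),
      ∀ y ∈ Icc (fun _ => a) (fun _ => b), |W x y - W x' y| ≤ C * ‖x - x'‖ ^ α)
    {x y : ι → ℝ} (hx : x ∈ Icc (fun _ => a) (fun _ => b))
    (hy : y ∈ Icc (fun _ => a) (fun _ => b)) :
    |W x y - W (cubeCenter a b n (cubeIndex a b n x)) (cubeCenter a b n (cubeIndex a b n y))| ≤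
      2 * C * ((b - a) / (2 * n)) ^ α := by
  set x' := cubeCenter a b n (cubeIndex a b n x)
  set y' := cubeCenter a b n (cubeIndex a b n y)
  have hmesh : ∀ z ∈ Icc (fun _ : ι => a) (fun _ => b),
      C * ‖z - cubeCenter a b n (cubeIndex a b n z)‖ ^ α ≤ C * ((b - a) / (2 * n)) ^ α :=
    fun z hz => by gcongr; exact norm_sub_cubeCenter_cubeIndex_le hab hz
  have hx' := cubeCenter_mem_Icc hab.le (cubeIndex a b n x)
  calc |W x y - W x' y'| ≤ |W x y - W x' y| + |W y x' - W y' x'| := by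
        rw [hsymm y, hsymm y']; exact abs_sub_le _ _ _
    _ ≤ C * ‖x - x'‖ ^ α + C * ‖y - y'‖ ^ α :=
        add_le_add (hW x hx x' hx' y hy) (hW y hy y' (cubeCenter_mem_Icc hab.le _) x' hx')
    _ ≤ 2 * C * ((b - a) / (2 * n)) ^ α := by linarith [hmesh x hx, hmesh y hy]

end CubeGrid

theorem rpow_integral_rpow_abs_le_of_ae_abs_le {Ω : Type*} [MeasurableSpace Ω] {ρ : Measure Ω}
    [IsProbabilityMeasure ρ] {F : Ω → ℝ} {M p : ℝ} (hp : 0 < p) (hF : ∀ᵐ ω ∂ρ, |F ω| ≤ M) :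
    (∫ ω, |F ω| ^ p ∂ρ) ^ (1 / p) ≤ M := by
  obtain ⟨ω, hω⟩ := hF.exists
  have hM : 0 ≤ M := (abs_nonneg _).trans hω
  have hint : ∫ ω, |F ω| ^ p ∂ρ ≤ M ^ p := by
    refine (integral_mono_of_nonneg (ae_of_all _ fun ω => by positivity) (integrable_const _)
      (hF.mono fun ω hω => Real.rpow_le_rpow (abs_nonneg _) hω hp.le)).trans_eq ?_
    simp
  calc (∫ ω, |F ω| ^ p ∂ρ) ^ (1 / p) ≤ (M ^ p) ^ (1 / p) :=
        Real.rpow_le_rpow (integral_nonneg fun ω => by positivity) hint (by positivity)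
    _ = M := by rw [one_div, Real.rpow_rpow_inv hM hp.ne']

section GraphCoupling

variable {X Y : Type*} [MeasurableSpace X] [MeasurableSpace Y] {μ : Measure X} {g : X → Y}

noncomputable def graphCoupling (μ : Measure X) (g : X → Y) : Measure (X × Y) :=
  μ.map fun x => (x, g x)

theorem isProbabilityMeasure_graphCoupling [IsProbabilityMeasure μ] (hg : Measurable g) :
    IsProbabilityMeasure (graphCoupling μ g) :=
  Measure.isProbabilityMeasure_map (measurable_id'.prodMk hg).aemeasurable

theorem graphCoupling_map_fst (hg : Measurable g) : (graphCoupling μ g).map Prod.fst = μ := by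
  rw [graphCoupling, Measure.map_map measurable_fst (measurable_id'.prodMk hg)]
  exact Measure.map_id

theorem graphCoupling_map_snd (hg : Measurable g) :
    (graphCoupling μ g).map Prod.snd = μ.map g := by
  rw [graphCoupling, Measure.map_map measurable_snd (measurable_id'.prodMk hg)]
  rfl

theorem ae_graphCoupling [MeasurableEq Y] (hg : Measurable g) {s : Set X}
    (hs : MeasurableSet s) (hμs : ∀ᵐ x ∂μ, x ∈ s) :
    ∀ᵐ q ∂graphCoupling μ g, q.1 ∈ s ∧ q.2 = g q.1 := by
  have hS : MeasurableSet {q : X × Y | q.1 ∈ s ∧ q.2 = g q.1} :=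
    (measurable_fst hs).inter (measurableSet_eq_fun measurable_snd (hg.comp measurable_fst))
  rw [graphCoupling, ae_map_iff (measurable_id'.prodMk hg).aemeasurable hS]
  exact hμs.mono fun x hx => ⟨hx, rfl⟩

theorem rpow_integral_graphCoupling_le [IsProbabilityMeasure μ] [MeasurableEq Y]
    (hg : Measurable g) {s : Set X} (hs : MeasurableSet s) (hμs : ∀ᵐ x ∂μ, x ∈ s)
    {W : X → X → ℝ} {B : Y → Y → ℝ} {M p : ℝ} (hp : 0 < p)
    (hWB : ∀ x ∈ s, ∀ y ∈ s, |W x y - B (g x) (g y)| ≤ M) :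
    (∫ q, |W q.1.1 q.2.1 - B q.1.2 q.2.2| ^ p ∂(graphCoupling μ g).prod (graphCoupling μ g))
      ^ (1 / p) ≤ M := by
  have := isProbabilityMeasure_graphCoupling (μ := μ) hg
  have h := ae_graphCoupling hg hs hμs
  refine rpow_integral_rpow_abs_le_of_ae_abs_le hp ?_
  filter_upwards [Measure.quasiMeasurePreserving_fst.ae h, Measure.quasiMeasurePreserving_snd.ae h]
    with q ⟨hx, hgx⟩ ⟨hy, hgy⟩
  rw [hgx, hgy]
  exact hWB _ hx _ hy

end GraphCoupling

theorem exists_nat_le_inv_pow_and_inv_two_mul_le_rpow {κ : ℝ} (hκ0 : 0 < κ) (hκ1 : κ ≤ 1)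
    (d : ℕ) : ∃ n : ℕ, 0 < n ∧ κ ≤ ((n : ℝ) ^ d)⁻¹ ∧ (2 * n : ℝ)⁻¹ ≤ κ ^ (1 / d : ℝ) := by
  set u := κ ^ (-(1 / d : ℝ))
  have hu : 1 ≤ u := Real.one_le_rpow_of_pos_of_le_one_of_nonpos hκ0 hκ1 (by simp)
  have hn : 0 < ⌊u⌋₊ := Nat.floor_pos.2 hu
  refine ⟨⌊u⌋₊, hn, ?_, ?_⟩
  · refine (le_inv_comm₀ hκ0 (by positivity)).2 ?_
    calc (⌊u⌋₊ : ℝ) ^ d ≤ u ^ d := by gcongr; exact Nat.floor_le (by linarith)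
      _ = κ ^ (-(1 / d : ℝ) * d) := by rw [← Real.rpow_natCast, ← Real.rpow_mul hκ0.le]
      _ ≤ κ ^ (-1 : ℝ) := Real.rpow_le_rpow_of_exponent_ge hκ0 hκ1 (by
          rcases eq_or_ne (d : ℝ) 0 with h | h <;> simp [h])
      _ = κ⁻¹ := Real.rpow_neg_one κ
  · have hfloor : 1 ≤ (⌊u⌋₊ : ℝ) := by exact_mod_cast Nat.one_le_floor_iff _ |>.2 hu
    calc (2 * ⌊u⌋₊ : ℝ)⁻¹ ≤ u⁻¹ := inv_anti₀ (by positivity) (by linarith [Nat.lt_floor_add_one u])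
      _ = κ ^ (1 / d : ℝ) := by simp only [u, Real.rpow_neg hκ0.le, inv_inv]

theorem mul_rpow_div_two_mul_le {C L α κ : ℝ} {d n : ℕ} (hC : 0 ≤ C) (hL : 0 ≤ L) (hα : 0 ≤ α)
    (hκ : 0 ≤ κ) (hn : (2 * n : ℝ)⁻¹ ≤ κ ^ (1 / d : ℝ)) :
    C * (L / (2 * n)) ^ α ≤ C * L ^ α * κ ^ (α / d) := by
  rw [div_eq_mul_inv, Real.mul_rpow hL (by positivity), ← mul_assoc]
  gcongr
  calc ((2 * n : ℝ)⁻¹) ^ α ≤ (κ ^ (1 / d : ℝ)) ^ α := by gcongr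
    _ = κ ^ (α / d) := by rw [← Real.rpow_mul hκ]; ring_nf

theorem holder_graphon_oracle_error_general
    (d : ℕ) (R C α : ℝ)
    (hR : 0 < R) (hα : 0 < α) (hC : 0 ≤ C)
    (W : (Fin d → ℝ) → (Fin d → ℝ) → ℝ)
    (hWsymm : ∀ x y, W x y = W y x) (hWnn : ∀ x y, 0 ≤ W x y)
    (hHolder : ∀ x ∈ Icc (fun _ => -R) (fun _ => R), ∀ x' ∈ Icc (fun _ => -R) (fun _ => R),
      ∀ y ∈ Icc (fun _ => -R) (fun _ => R), |W x y - W x' y| ≤ C * ‖x - x'‖ ^ α)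
    -- the uniform probability measure on the box
    (μ : Measure (Fin d → ℝ))
    (hμ : μ = (volume (Icc (fun _ : Fin d => -R) (fun _ => R)))⁻¹ •
      volume.restrict (Icc (fun _ : Fin d => -R) (fun _ => R)))
    (p κ : ℝ) (hp : 1 ≤ p) (hκ0 : 0 < κ) (hκ1 : κ ≤ 1) :
    ∃ (k : ℕ) (pv : Fin k → ℝ) (B : Fin k → Fin k → ℝ)
      (ν : Measure ((Fin d → ℝ) × Fin k)),
      0 < k ∧ (∀ i, κ ≤ pv i) ∧ (∑ i, pv i) = 1 ∧
      (∀ i j, B i j = B j i) ∧ (∀ i j, 0 ≤ B i j) ∧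
      IsProbabilityMeasure ν ∧ ν.map Prod.fst = μ ∧
      (∀ i, ν.map Prod.snd {i} = ENNReal.ofReal (pv i)) ∧
      (∫ q, |W q.1.1 q.2.1 - B q.1.2 q.2.2| ^ p ∂(ν.prod ν)) ^ (1/p) ≤
        4 * (1 + 2 * C * (2 * R) ^ α) * κ ^ (α / d) := by
  replace hμ : μ = volume[|Icc (fun _ : Fin d => -R) (fun _ => R)] := hμ
  have hRR : -R < R := by linarith
  have : IsProbabilityMeasure μ := hμ ▸ isProbabilityMeasure_cond_volume_Icc hRR
  have hbox : ∀ᵐ x ∂μ, x ∈ Icc (fun _ => -R) (fun _ => R) := hμ ▸ ae_cond_mem measurableSet_Icc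
  obtain ⟨n, hn, hκn, hside⟩ := exists_nat_le_inv_pow_and_inv_two_mul_le_rpow hκ0 hκ1 d
  have : NeZero n := ⟨hn.ne'⟩
  let e : (Fin d → Fin n) ≃ Fin (n ^ d) := finFunctionFinEquiv
  have hg : Measurable fun x => e (cubeIndex (-R) R n x) :=
    (measurable_of_countable e).comp measurable_cubeIndex
  let B i j := W (cubeCenter (-R) R n (e.symm i)) (cubeCenter (-R) R n (e.symm j))
  refine ⟨n ^ d, fun _ => ((n : ℝ) ^ d)⁻¹, B, graphCoupling μ _, by positivity, fun _ => hκn, ?_,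
    fun _ _ => hWsymm _ _, fun _ _ => hWnn _ _, isProbabilityMeasure_graphCoupling hg,
    graphCoupling_map_fst hg, fun i => ?_, ?_⟩
  · simp
  · rw [graphCoupling_map_snd hg, Measure.map_apply hg (measurableSet_singleton i)]
    have hcell : (fun x => e (cubeIndex (-R) R n x)) ⁻¹' {i} =
        cubeIndex (-R) R n ⁻¹' {e.symm i} := by
      ext; simp [← Equiv.eq_symm_apply]
    rw [hcell, hμ, cond_volume_cubeIndex_preimage hRR, Fintype.card_fin]
  · have hκα : 0 ≤ κ ^ (α / d) := by positivity
    have hCR : 0 ≤ C * (2 * R) ^ α := by positivity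
    calc _ ≤ 2 * C * ((R - -R) / (2 * n)) ^ α :=
          rpow_integral_graphCoupling_le hg measurableSet_Icc hbox (by linarith) fun x hx y hy => by
            simpa [B, e] using abs_sub_cubeCenter_le_of_holder hRR hC hα.le hWsymm hHolder hx hy
      _ ≤ 2 * (C * (2 * R) ^ α * κ ^ (α / d)) := by
          rw [mul_assoc, sub_neg_eq_add, ← two_mul]
          gcongr 2 * ?_
          exact mul_rpow_div_two_mul_le hC (by positivity) hα.le hκ0.le hside
      _ ≤ 4 * (1 + 2 * C * (2 * R) ^ α) * κ ^ (α / d) := by nlinarith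

/-- Oracle error for an `α`-Hölder-continuous normalized graphon on the box
`[-R,R]^d` with the uniform measure: there is a block model with all class
probabilities at least `κ` and a coupling realizing `δ_p`-error at most
`4D κ^{α/d}`, where `D = 1 + 2C(2R)^α`. -/
theorem holder_graphon_oracle_error
    (d : ℕ) (hd : 1 ≤ d) (R C α : ℝ)
    (hR : 0 < R) (hα : 0 < α) (hα1 : α ≤ 1) (hC : 0 ≤ C)
    (W : (Fin d → ℝ) → (Fin d → ℝ) → ℝ)
    (hWmeas : Measurable (fun z : (Fin d → ℝ) × (Fin d → ℝ) => W z.1 z.2))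
    (hWsymm : ∀ x y, W x y = W y x) (hWnn : ∀ x y, 0 ≤ W x y)
    (hHolder : ∀ x ∈ Icc (fun _ => -R) (fun _ => R), ∀ x' ∈ Icc (fun _ => -R) (fun _ => R),
      ∀ y ∈ Icc (fun _ => -R) (fun _ => R), |W x y - W x' y| ≤ C * ‖x - x'‖ ^ α)
    -- the uniform probability measure on the box
    (μ : Measure (Fin d → ℝ))
    (hμ : μ = (volume (Icc (fun _ : Fin d => -R) (fun _ => R)))⁻¹ •
      volume.restrict (Icc (fun _ : Fin d => -R) (fun _ => R)))
    (hWnorm : ∫ z, W z.1 z.2 ∂(μ.prod μ) = 1)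
    (p κ : ℝ) (hp : 1 ≤ p) (hκ0 : 0 < κ) (hκ1 : κ ≤ 1) :
    ∃ (k : ℕ) (pv : Fin k → ℝ) (B : Fin k → Fin k → ℝ)
      (ν : Measure ((Fin d → ℝ) × Fin k)),
      0 < k ∧ (∀ i, κ ≤ pv i) ∧ (∑ i, pv i) = 1 ∧
      (∀ i j, B i j = B j i) ∧ (∀ i j, 0 ≤ B i j) ∧
      IsProbabilityMeasure ν ∧ ν.map Prod.fst = μ ∧
      (∀ i, ν.map Prod.snd {i} = ENNReal.ofReal (pv i)) ∧
      (∫ q, |W q.1.1 q.2.1 - B q.1.2 q.2.2| ^ p ∂(ν.prod ν)) ^ (1/p) ≤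
        4 * (1 + 2 * C * (2 * R) ^ α) * κ ^ (α / d) :=
  holder_graphon_oracle_error_general d R C α hR hα hC W hWsymm hWnn hHolder μ hμ p κ hp hκ0 hκ1
end

section
/- Let α ∈ (0,1), 1 ≤ p < 1/α, and g(x) = (1−α)(1−x)^{−α} on [0,1). For ε = 1/k with k a positive integer, let g' be the step function obtained by averaging g over the intervals [(i−1)/k, i/k] for i = 1,…,k−1 and setting g' = 0 on [(k−1)/k, 1]. Then ‖g − g'‖_{L^p[0,1]}^p = O(ε^{1−αp}) as ε → 0. -/
/-!
Write `g = powerLawDensity α`. On a cell `[a, b)` of length `1 / k` other than the last one, `g` is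
increasing, so `g x` and the cell average both lie in `[g a, g b]`, and
`g b - g a ≤ (1 - α) (b - a) (1 - b) ^ (-α - 1)`. Since `1 - x ≤ 2 (1 - b)`, this gives
`|g x - g' x| ≤ C k⁻¹ (1 - x) ^ (-α - 1)`, whose `p`-th power integrates over `[0, 1 - 1 / k)` to
`O(k ^ (-p) · k ^ ((α + 1) p - 1))` because `(α + 1) p > 1`. On the last cell `g' = 0` and
`|g| ^ p = (1 - α) ^ p (1 - x) ^ (-α p)` integrates to `O(k ^ (α p - 1))` because `α p < 1`.
-/

open MeasureTheory Set Real

theorem setIntegral_union_le_add {X : Type*} [MeasurableSpace X] {μ : Measure X}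
    {s t : Set X} {f F G : X → ℝ} (hst : Disjoint s t) (hs : MeasurableSet s)
    (ht : MeasurableSet t) (hf : ∀ x ∈ s ∪ t, 0 ≤ f x) (hfF : ∀ x ∈ s, f x ≤ F x)
    (hfG : ∀ x ∈ t, f x ≤ G x) (hF : IntegrableOn F s μ) (hG : IntegrableOn G t μ) :
    ∫ x in s ∪ t, f x ∂μ ≤ ∫ x in s, F x ∂μ + ∫ x in t, G x ∂μ := by
  classical
  have hFs : EqOn (s.piecewise F G) F s := fun x hx => piecewise_eq_of_mem _ _ _ hx
  have hGt : EqOn (s.piecewise F G) G t := fun x hx =>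
    piecewise_eq_of_notMem _ _ _ (hst.notMem_of_mem_right hx)
  have hHs : IntegrableOn (s.piecewise F G) s μ := hF.congr_fun hFs.symm hs
  have hHt : IntegrableOn (s.piecewise F G) t μ := hG.congr_fun hGt.symm ht
  calc ∫ x in s ∪ t, f x ∂μ ≤ ∫ x in s ∪ t, s.piecewise F G x ∂μ := by
        refine integral_mono_of_nonneg ((ae_restrict_iff' (hs.union ht)).2 (.of_forall hf))
          (hHs.union hHt) ((ae_restrict_iff' (hs.union ht)).2 (.of_forall ?_))
        rintro x (hx | hx)
        · exact (hfF x hx).trans_eq (hFs hx).symm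
        · exact (hfG x hx).trans_eq (hGt hx).symm
    _ = ∫ x in s, F x ∂μ + ∫ x in t, G x ∂μ := by
        rw [setIntegral_union hst ht hHs hHt, setIntegral_congr_fun hs hFs,
          setIntegral_congr_fun ht hGt]

theorem abs_sub_inv_mul_setIntegral_le_of_monotoneOn {f : ℝ → ℝ} {a b x : ℝ} (hab : a < b)
    (hf : MonotoneOn f (Icc a b)) (hx : x ∈ Icc a b) :
    |f x - (b - a)⁻¹ * ∫ t in Ico a b, f t| ≤ f b - f a := by
  have hint : IntegrableOn f (Ico a b) :=
    (hf.integrableOn_isCompact isCompact_Icc).mono_set Ico_subset_Icc_self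
  have hvol : volume (Ico a b) ≠ ⊤ := measure_Ico_lt_top.ne
  have ha : a ∈ Icc a b := left_mem_Icc.2 hab.le
  have hb : b ∈ Icc a b := right_mem_Icc.2 hab.le
  have hlower : (b - a) * f a ≤ ∫ t in Ico a b, f t := by
    simpa [volume_real_Ico_of_le hab.le, mul_comm] using setIntegral_ge_of_const_le_real
      measurableSet_Ico hvol (fun t ht => hf ha (Ico_subset_Icc_self ht) ht.1) hint
  have hupper : ∫ t in Ico a b, f t ≤ (b - a) * f b := by
    calc ∫ t in Ico a b, f t ≤ ∫ _ in Ico a b, f b :=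
          setIntegral_mono_on hint (integrableOn_const hvol) measurableSet_Ico
            (fun t ht => hf (Ico_subset_Icc_self ht) hb ht.2.le)
      _ = (b - a) * f b := by rw [setIntegral_const, volume_real_Ico_of_le hab.le, smul_eq_mul]
  have hba : 0 < b - a := sub_pos.2 hab
  have hmean_lower : f a ≤ (b - a)⁻¹ * ∫ t in Ico a b, f t := by
    rwa [le_inv_mul_iff₀ hba]
  have hmean_upper : (b - a)⁻¹ * ∫ t in Ico a b, f t ≤ f b := by
    rwa [inv_mul_le_iff₀ hba]
  have hxa : f a ≤ f x := hf ha hx hx.1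
  have hxb : f x ≤ f b := hf hx hb hx.2
  rw [abs_le]
  constructor <;> linarith

theorem rpow_neg_sub_rpow_neg_le {α u v : ℝ} (hα : α ≤ 1) (hu : 0 < u) (huv : u ≤ v) :
    u ^ (-α) - v ^ (-α) ≤ (v - u) * u ^ (-α - 1) := by
  have hv : 0 < v := hu.trans_le huv
  have hratio : u / v ≤ (u / v) ^ α := by
    simpa using rpow_le_rpow_of_exponent_ge (div_pos hu hv) (div_le_one_of_le₀ huv hv.le) hα
  have hv_eq : v ^ (-α) = u ^ (-α) * (u / v) ^ α := by
    rw [div_rpow hu.le hv.le, rpow_neg hu.le, rpow_neg hv.le]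
    field_simp [(rpow_pos_of_pos hu α).ne']
  calc u ^ (-α) - v ^ (-α) ≤ u ^ (-α) * (1 - u / v) := by
        rw [hv_eq, mul_one_sub]; gcongr
    _ ≤ u ^ (-α) * ((v - u) / u) := by
        gcongr
        rw [one_sub_div hv.ne', div_le_div_iff₀ hv hu]
        nlinarith
    _ = (v - u) * u ^ (-α - 1) := by
        rw [rpow_sub hu, rpow_one]; ring

theorem integrableOn_Icc_one_sub_rpow {a c : ℝ} (hc : c < 1) (s : ℝ) :
    IntegrableOn (fun x => (1 - x) ^ s) (Icc a c) :=
  ContinuousOn.integrableOn_Icc <| (continuousOn_const.sub continuousOn_id).rpow_const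
    fun _ hx => Or.inl (sub_pos.2 (hx.2.trans_lt hc)).ne'

theorem integrableOn_Icc_one_sub_rpow_neg {a r : ℝ} (ha : a ≤ 1) (hr : r < 1) :
    IntegrableOn (fun x => (1 - x) ^ (-r)) (Icc a 1) := by
  have h := (intervalIntegral.intervalIntegrable_rpow' (r := -r) (a := 1 - a) (b := 1 - 1)
    (by linarith)).comp_sub_left 1
  simp only [sub_sub_cancel] at h
  exact (intervalIntegrable_iff_integrableOn_Icc_of_le ha).1 h

theorem integral_Ico_one_sub_rpow_neg_le {h s : ℝ} (hs : 1 < s) (h0 : 0 < h) (h1 : h ≤ 1) :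
    ∫ x in Ico 0 (1 - h), (1 - x) ^ (-s) ≤ h ^ (1 - s) / (s - 1) := by
  have hint : ∫ x in Ico 0 (1 - h), (1 - x) ^ (-s) = (1 - h ^ (1 - s)) / (1 - s) := by
    rw [setIntegral_congr_set Ico_ae_eq_Ioc, ← intervalIntegral.integral_of_le (by linarith),
      intervalIntegral.integral_comp_sub_left (fun u => u ^ (-s)), sub_sub_cancel, sub_zero,
      integral_rpow (Or.inr ⟨by linarith, notMem_uIcc_of_lt h0 (by norm_num)⟩)]
    norm_num [neg_add_eq_sub]
  rw [hint, ← neg_div_neg_eq, neg_sub, neg_sub]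
  gcongr
  linarith

theorem integral_Icc_one_sub_rpow_neg {h r : ℝ} (hr : r < 1) (h0 : 0 ≤ h) :
    ∫ x in Icc (1 - h) 1, (1 - x) ^ (-r) = h ^ (1 - r) / (1 - r) := by
  rw [integral_Icc_eq_integral_Ioc, ← intervalIntegral.integral_of_le (by linarith),
    intervalIntegral.integral_comp_sub_left (fun u => u ^ (-r)),
    integral_rpow (Or.inl (by linarith)), neg_add_eq_sub]
  simp [zero_rpow (sub_pos.2 hr).ne']

noncomputable def powerLawDensity (α x : ℝ) : ℝ := (1 - α) * (1 - x) ^ (-α)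

/-- The paper's `g'` for `f = g`: the average of `f` over the cell `[i / k, (i + 1) / k)` containing
`x`, and `0` from `1 - 1 / k` on. -/
noncomputable def stepApprox (f : ℝ → ℝ) (k : ℕ) (x : ℝ) : ℝ :=
  if ⌊x * k⌋ + 1 < (k : ℤ) then
    k * ∫ t in Ico ((⌊x * k⌋ : ℝ) / k) (((⌊x * k⌋ : ℝ) + 1) / k), f t
  else 0

theorem floor_mul_add_one_lt_iff {k : ℕ} (hk : 0 < k) (x : ℝ) :
    ⌊x * k⌋ + 1 < (k : ℤ) ↔ x < 1 - 1 / k := by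
  have hk' : (0 : ℝ) < k := by exact_mod_cast hk
  rw [← lt_sub_iff_add_lt, Int.floor_lt, sub_div' hk'.ne', lt_div_iff₀ hk']
  push_cast
  rw [one_mul]

theorem powerLawDensity_monotoneOn {α : ℝ} (hα0 : 0 ≤ α) (hα1 : α ≤ 1) :
    MonotoneOn (powerLawDensity α) (Iio 1) := fun _ _ _ ht hst =>
  mul_le_mul_of_nonneg_left (rpow_le_rpow_of_nonpos (sub_pos.2 ht) (by linarith) (by linarith))
    (sub_nonneg.2 hα1)

theorem powerLawDensity_sub_le {α a b : ℝ} (hα1 : α ≤ 1) (hab : a ≤ b) (hb : b < 1) :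
    powerLawDensity α b - powerLawDensity α a ≤ (1 - α) * (b - a) * (1 - b) ^ (-α - 1) := by
  have h := rpow_neg_sub_rpow_neg_le hα1 (sub_pos.2 hb) (sub_le_sub_left hab 1)
  rw [sub_sub_sub_cancel_left] at h
  calc powerLawDensity α b - powerLawDensity α a
      = (1 - α) * ((1 - b) ^ (-α) - (1 - a) ^ (-α)) := by
        simp only [powerLawDensity]; ring
    _ ≤ (1 - α) * ((b - a) * (1 - b) ^ (-α - 1)) := by gcongr
    _ = (1 - α) * (b - a) * (1 - b) ^ (-α - 1) := by ring

theorem abs_sub_stepApprox_le {α : ℝ} (hα0 : 0 ≤ α) (hα1 : α ≤ 1) {k : ℕ} (hk : 0 < k)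
    {x : ℝ} (hx : x < 1 - 1 / k) :
    |powerLawDensity α x - stepApprox (powerLawDensity α) k x| ≤
      (1 - α) * 2 ^ (α + 1) * (1 / k) * (1 - x) ^ (-α - 1) := by
  have hcell := (floor_mul_add_one_lt_iff hk x).2 hx
  have hk : (0 : ℝ) < k := by exact_mod_cast hk
  rw [stepApprox, if_pos hcell]
  set a : ℝ := ⌊x * k⌋ / k
  set b : ℝ := (⌊x * k⌋ + 1) / k
  have hax : a ≤ x := by rw [div_le_iff₀ hk]; exact Int.floor_le _
  have hxb : x < b := by rw [lt_div_iff₀ hk]; exact Int.lt_floor_add_one _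
  have hba : b - a = 1 / k := by ring
  have hb : b ≤ 1 - 1 / k := by
    have : (⌊x * k⌋ : ℝ) + 1 ≤ k - 1 := by exact_mod_cast (by omega : ⌊x * k⌋ + 1 ≤ (k : ℤ) - 1)
    calc b ≤ (k - 1) / k := div_le_div_of_nonneg_right this hk.le
      _ = 1 - 1 / k := by field_simp
  have hb1 : b < 1 := hb.trans_lt (sub_lt_self 1 (by positivity))
  have h1x : 0 < 1 - x := by linarith
  have hhalf : (1 - x) / 2 ≤ 1 - b := by linarith
  have hmean := abs_sub_inv_mul_setIntegral_le_of_monotoneOn (hax.trans_lt hxb)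
    ((powerLawDensity_monotoneOn hα0 hα1).mono fun t ht => ht.2.trans_lt hb1) ⟨hax, hxb.le⟩
  rw [hba, one_div, inv_inv] at hmean
  calc _ ≤ powerLawDensity α b - powerLawDensity α a := hmean
    _ ≤ (1 - α) * (b - a) * (1 - b) ^ (-α - 1) :=
      powerLawDensity_sub_le hα1 (hax.trans hxb.le) hb1
    _ ≤ (1 - α) * (1 / k) * ((1 - x) / 2) ^ (-α - 1) := by
      rw [hba]
      have h1α : 0 ≤ 1 - α := by linarith
      exact mul_le_mul_of_nonneg_left
        (rpow_le_rpow_of_nonpos (by positivity) hhalf (by linarith)) (by positivity)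
    _ = (1 - α) * 2 ^ (α + 1) * (1 / k) * (1 - x) ^ (-α - 1) := by
      rw [div_rpow h1x.le zero_le_two, show -α - 1 = -(α + 1) by ring, rpow_neg zero_le_two,
        div_inv_eq_mul]
      ring

theorem abs_sub_stepApprox_rpow_le {α p : ℝ} (hα0 : 0 ≤ α) (hα1 : α ≤ 1) (hp : 0 ≤ p)
    {k : ℕ} (hk : 0 < k) {x : ℝ} (hx : x < 1 - 1 / k) :
    |powerLawDensity α x - stepApprox (powerLawDensity α) k x| ^ p ≤
      ((1 - α) * 2 ^ (α + 1)) ^ p * (1 / k : ℝ) ^ p * (1 - x) ^ (-((α + 1) * p)) := by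
  have h1α : 0 ≤ 1 - α := by linarith
  have h1x : 0 < 1 - x := by linarith [one_div_pos.2 (Nat.cast_pos.2 hk : (0 : ℝ) < k)]
  calc _ ≤ ((1 - α) * 2 ^ (α + 1) * (1 / k) * (1 - x) ^ (-α - 1)) ^ p :=
        rpow_le_rpow (abs_nonneg _) (abs_sub_stepApprox_le hα0 hα1 hk hx) hp
    _ = ((1 - α) * 2 ^ (α + 1)) ^ p * (1 / k : ℝ) ^ p * (1 - x) ^ (-((α + 1) * p)) := by
        rw [mul_rpow (by positivity) (by positivity), mul_rpow (by positivity) (by positivity),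
          ← rpow_mul h1x.le]
        ring_nf

theorem abs_sub_stepApprox_rpow_eq {α : ℝ} (hα1 : α ≤ 1) (p : ℝ) {k : ℕ} (hk : 0 < k) {x : ℝ}
    (hx : 1 - 1 / k ≤ x) (hx1 : x ≤ 1) :
    |powerLawDensity α x - stepApprox (powerLawDensity α) k x| ^ p =
      (1 - α) ^ p * (1 - x) ^ (-(α * p)) := by
  have h1α : 0 ≤ 1 - α := sub_nonneg.2 hα1
  have h1x : 0 ≤ 1 - x := sub_nonneg.2 hx1
  rw [stepApprox, if_neg ((floor_mul_add_one_lt_iff hk x).not.2 hx.not_gt), sub_zero,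
    powerLawDensity, abs_of_nonneg (by positivity), mul_rpow h1α (by positivity),
    ← rpow_mul h1x, neg_mul]

theorem integral_abs_sub_stepApprox_rpow_le {α p : ℝ} (hα0 : 0 ≤ α) (hα1 : α < 1) (hp : 0 ≤ p)
    (hαp : α * p < 1) {k : ℕ} (hk : 0 < k) :
    ∫ x in Icc (0 : ℝ) 1, |powerLawDensity α x - stepApprox (powerLawDensity α) k x| ^ p ≤
      (((1 - α) * 2 ^ (α + 1)) ^ p * (1 / k : ℝ) ^ p *
          ∫ x in Ico 0 (1 - 1 / k : ℝ), (1 - x) ^ (-((α + 1) * p))) +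
        (1 - α) ^ p * ∫ x in Icc (1 - 1 / k : ℝ) 1, (1 - x) ^ (-(α * p)) := by
  have hh0 : (0 : ℝ) < 1 / k := by positivity
  have hh1 : (1 : ℝ) / k ≤ 1 := div_le_one_of_le₀ (by exact_mod_cast hk) (by positivity)
  rw [← Ico_union_Icc_eq_Icc (b := (1 - 1 / k : ℝ)) (by linarith) (by linarith),
    ← integral_const_mul, ← integral_const_mul]
  refine setIntegral_union_le_add (disjoint_left.2 fun _ hx hx' => hx'.1.not_gt hx.2)
    measurableSet_Ico measurableSet_Icc (fun x _ => by positivity)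
    (fun x hx => abs_sub_stepApprox_rpow_le hα0 hα1.le hp hk hx.2)
    (fun x hx => (abs_sub_stepApprox_rpow_eq hα1.le p hk hx.1 hx.2).le) ?_ ?_
  · exact ((integrableOn_Icc_one_sub_rpow (sub_lt_self 1 hh0) _).mono_set
      Ico_subset_Icc_self).const_mul _
  · exact (integrableOn_Icc_one_sub_rpow_neg (by linarith) hαp).const_mul _

/-- Step-function approximation of `g(x) = (1-α)(1-x)^{-α}`:
averaging over the intervals `[(i-1)/k, i/k]` for `i = 1,…,k-1` and setting the
last interval to `0` gives `‖g - g'‖_p^p = O((1/k)^{1-αp})`. -/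
theorem powerlaw_step_approx
    (α p : ℝ) (hα0 : 0 < α) (hα1 : α < 1) (hp : 1 ≤ p) (hpα : p < 1/α) :
    ∃ C₀ : ℝ, 0 < C₀ ∧ ∀ k : ℕ, 1 ≤ k →
      (∫ x in Icc (0:ℝ) 1,
        |(1 - α) * (1 - x) ^ (-α) -
          (if ⌊x * k⌋ + 1 < (k : ℤ) then
            (k : ℝ) * ∫ t in Ico ((⌊x * k⌋ : ℝ) / k) (((⌊x * k⌋ : ℝ) + 1) / k),
              (1 - α) * (1 - t) ^ (-α)
          else 0)| ^ p) ≤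
      C₀ * ((1 : ℝ) / k) ^ (1 - α * p) := by
  have hαp : α * p < 1 := by rwa [lt_div_iff₀ hα0, mul_comm] at hpα
  have hs : 1 < (α + 1) * p := by nlinarith
  have h1α : 0 < 1 - α := sub_pos.2 hα1
  set C := (1 - α) * 2 ^ (α + 1)
  refine ⟨C ^ p / ((α + 1) * p - 1) + (1 - α) ^ p / (1 - α * p),
    add_pos (div_pos (by positivity) (by linarith)) (div_pos (by positivity) (by linarith)),
    fun k hk => ?_⟩
  set h : ℝ := 1 / k
  have hh0 : 0 < h := by positivity
  have hh1 : h ≤ 1 := div_le_one_of_le₀ (by exact_mod_cast hk) (by positivity)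
  have hpow : h ^ p * h ^ (1 - (α + 1) * p) = h ^ (1 - α * p) := by
    rw [← rpow_add hh0]; ring_nf
  calc _ ≤ (C ^ p * h ^ p * ∫ x in Ico 0 (1 - h), (1 - x) ^ (-((α + 1) * p))) +
        (1 - α) ^ p * ∫ x in Icc (1 - h) 1, (1 - x) ^ (-(α * p)) :=
      integral_abs_sub_stepApprox_rpow_le hα0.le hα1 (by linarith) hαp hk
    _ ≤ C ^ p * h ^ p * (h ^ (1 - (α + 1) * p) / ((α + 1) * p - 1)) +
        (1 - α) ^ p * (h ^ (1 - α * p) / (1 - α * p)) := by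
      rw [integral_Icc_one_sub_rpow_neg hαp hh0.le]
      gcongr
      exact integral_Ico_one_sub_rpow_neg_le hs hh0 hh1
    _ = (C ^ p / ((α + 1) * p - 1) + (1 - α) ^ p / (1 - α * p)) * h ^ (1 - α * p) := by
      rw [← hpow]; ring
end

section
/- Let α ∈ (0,1), 1 ≤ p < 1/α, and let W(x,y) = (g(x)+g(y))/2 on [0,1]² with g(x) = (1−α)(1−x)^{−α}. Define tail_ρ^{(p)}(W) = ‖W − min{W,1/ρ}‖_p. Then tail_ρ^{(p)}(W) = O(ρ^{(1−pα)/(pα)}) as ρ → 0⁺. -/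
/-!
`W(x,y)` is the average of `g(x)` and `g(y)`, so convexity of `t ↦ (t - M)⁺` and of `t ↦ t ^ p`
bounds `(W - M)⁺ ^ p` by the average of `(g x - M)⁺ ^ p` and `(g y - M)⁺ ^ p`; hence the double
integral is at most `∫₀¹ (g - M)⁺ ^ p`. In the variable `s = 1 - x` the excess
`((1 - α) s ^ (-α) - M)⁺` vanishes for `s ≥ δ = ((1 - α) / M) ^ (1 / α)` and its `p`-th power is
at most `(1 - α) ^ p s ^ (-pα)` below `δ`, which is integrable since `pα < 1`. So with `M = 1 / ρ`
the integral is `O(δ ^ (1 - pα)) = O(ρ ^ ((1 - pα) / α))`.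
-/

open MeasureTheory Set

lemma abs_sub_min_self (a b : ℝ) : |a - min a b| = (a - b)⁺ := by
  rcases le_total a b with h | h
  · simp [min_eq_left h, posPart_eq_zero.2 (sub_nonpos.2 h)]
  · simp [min_eq_right h, posPart_eq_self.2 (sub_nonneg.2 h), abs_of_nonneg (sub_nonneg.2 h)]

lemma posPart_half_add_sub_le (a b M : ℝ) :
    ((a + b) / 2 - M)⁺ ≤ ((a - M)⁺ + (b - M)⁺) / 2 := by
  have ha := le_posPart (a - M)
  have hb := le_posPart (b - M)
  exact sup_le (by linarith) (by positivity)

lemma half_add_rpow_le {u v p : ℝ} (hu : 0 ≤ u) (hv : 0 ≤ v) (hp : 1 ≤ p) :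
    ((u + v) / 2) ^ p ≤ (u ^ p + v ^ p) / 2 := by
  have h := (convexOn_rpow hp).2 (mem_Ici.2 hu) (mem_Ici.2 hv) (by norm_num : (0:ℝ) ≤ 1 / 2)
    (by norm_num : (0:ℝ) ≤ 1 / 2) (add_halves 1)
  simp only [smul_eq_mul] at h
  have e : ∀ w : ℝ, 1 / 2 * w = w / 2 := fun w => by ring
  rwa [e, e, e, e, ← add_div, ← add_div] at h

lemma abs_sub_min_half_add_rpow_le {p : ℝ} (hp : 1 ≤ p) (a b M : ℝ) :
    |(a + b) / 2 - min ((a + b) / 2) M| ^ p ≤ (((a - M)⁺) ^ p + ((b - M)⁺) ^ p) / 2 := by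
  rw [abs_sub_min_self]
  calc ((a + b) / 2 - M)⁺ ^ p ≤ (((a - M)⁺ + (b - M)⁺) / 2) ^ p :=
        Real.rpow_le_rpow (posPart_nonneg _) (posPart_half_add_sub_le a b M) (by linarith)
    _ ≤ _ := half_add_rpow_le (posPart_nonneg _) (posPart_nonneg _) hp

lemma integral_integral_le_integral_of_le_half_add {Ω : Type*} [MeasurableSpace Ω]
    {μ : Measure Ω} [IsProbabilityMeasure μ] {F : Ω → Ω → ℝ} {φ : Ω → ℝ}
    (hφ : Integrable φ μ) (hF₀ : ∀ x y, 0 ≤ F x y) (hF : ∀ x y, F x y ≤ (φ x + φ y) / 2) :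
    ∫ x, ∫ y, F x y ∂μ ∂μ ≤ ∫ x, φ x ∂μ := by
  have half_add_integral : ∀ (a : ℝ) {ψ : Ω → ℝ}, Integrable ψ μ →
      ∫ y, (a + ψ y) / 2 ∂μ = (a + ∫ y, ψ y ∂μ) / 2 := fun a ψ hψ => by
    rw [integral_div, integral_add (integrable_const a) hψ, integral_const, probReal_univ,
      one_smul]
  have inner : ∀ x, ∫ y, F x y ∂μ ≤ (φ x + ∫ y, φ y ∂μ) / 2 := fun x => by
    rw [← half_add_integral _ hφ]
    exact integral_mono_of_nonneg (.of_forall (hF₀ x)) (((integrable_const _).add hφ).div_const 2)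
      (.of_forall (hF x))
  calc ∫ x, ∫ y, F x y ∂μ ∂μ ≤ ∫ x, (φ x + ∫ y, φ y ∂μ) / 2 ∂μ :=
        integral_mono_of_nonneg (.of_forall fun x => integral_nonneg (hF₀ x))
          ((hφ.add (integrable_const _)).div_const 2) (.of_forall inner)
    _ = ∫ x, φ x ∂μ := by
        simp_rw [add_comm (φ _)]
        rw [half_add_integral _ hφ, add_self_div_two]

lemma integral_Icc_comp_one_sub (φ : ℝ → ℝ) :
    ∫ x in Icc (0:ℝ) 1, φ (1 - x) = ∫ s in (0:ℝ)..1, φ s := by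
  rw [integral_Icc_eq_integral_Ioc, ← intervalIntegral.integral_of_le zero_le_one,
    intervalIntegral.integral_comp_sub_left]
  norm_num

lemma integrableOn_Icc_comp_one_sub {φ : ℝ → ℝ} (hφ : IntegrableOn φ (Ioc 0 1)) :
    IntegrableOn (fun x => φ (1 - x)) (Icc 0 1) := by
  rw [← intervalIntegrable_iff_integrableOn_Ioc_of_le zero_le_one] at hφ
  rw [← intervalIntegrable_iff_integrableOn_Icc_of_le zero_le_one]
  simpa using (hφ.comp_sub_left 1).symm

lemma integrable_indicator_Ioc_mul_rpow {r : ℝ} (hr : -1 < r) (a : ℝ) {δ : ℝ} (hδ : 0 ≤ δ) :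
    Integrable ((Ioc 0 δ).indicator fun s => a * s ^ r) := by
  refine IntegrableOn.integrable_indicator ?_ measurableSet_Ioc
  rw [← intervalIntegrable_iff_integrableOn_Ioc_of_le hδ]
  exact (intervalIntegral.intervalIntegrable_rpow' hr).const_mul a

/-- For `c = 1 - α` this is `(g (1 - s) - M)⁺`. -/
noncomputable def powerLawExcess (c α M s : ℝ) : ℝ := (c * s ^ (-α) - M)⁺

lemma powerLawExcess_nonneg (c α M s : ℝ) : 0 ≤ powerLawExcess c α M s := posPart_nonneg _

section PowerLawExcess

variable {c α M p : ℝ}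

lemma mul_rpow_neg_le_of_le (hc : 0 < c) (hM : 0 < M) (hα : 0 < α) {s : ℝ}
    (hs : (c / M) ^ (1 / α) ≤ s) : c * s ^ (-α) ≤ M := by
  have hδ : 0 < (c / M) ^ (1 / α) := by positivity
  have hs₀ : 0 < s := hδ.trans_le hs
  have hsα : c / M ≤ s ^ α := by
    calc c / M = ((c / M) ^ (1 / α)) ^ α := by
          rw [← Real.rpow_mul (by positivity), one_div_mul_cancel hα.ne', Real.rpow_one]
      _ ≤ s ^ α := Real.rpow_le_rpow hδ.le hs hα.le
  rw [Real.rpow_neg hs₀.le, ← div_eq_mul_inv, div_le_iff₀ (by positivity)]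
  rwa [div_le_iff₀ hM, mul_comm] at hsα

lemma powerLawExcess_rpow_le_indicator (hc : 0 < c) (hM : 0 < M) (hα : 0 < α) (hp : 0 < p)
    {s : ℝ} (hs : 0 < s) :
    powerLawExcess c α M s ^ p ≤
      (Ioc 0 ((c / M) ^ (1 / α))).indicator (fun s => c ^ p * s ^ (-(p * α))) s := by
  by_cases hsδ : s ≤ (c / M) ^ (1 / α)
  · rw [indicator_of_mem (show s ∈ Ioc 0 _ from ⟨hs, hsδ⟩)]
    have hle : powerLawExcess c α M s ≤ c * s ^ (-α) := sup_le (by linarith) (by positivity)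
    calc powerLawExcess c α M s ^ p ≤ (c * s ^ (-α)) ^ p :=
          Real.rpow_le_rpow (powerLawExcess_nonneg ..) hle hp.le
      _ = c ^ p * s ^ (-(p * α)) := by
          rw [Real.mul_rpow hc.le (by positivity), ← Real.rpow_mul hs.le, neg_mul, mul_comm α]
  · rw [indicator_of_notMem fun h => hsδ h.2, powerLawExcess,
      posPart_eq_zero.2 (sub_nonpos.2 (mul_rpow_neg_le_of_le hc hM hα (not_le.1 hsδ).le)),
      Real.zero_rpow hp.ne']

lemma integrableOn_powerLawExcess_rpow (hc : 0 < c) (hM : 0 < M) (hα : 0 < α) (hp : 0 < p)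
    (hpα : p * α < 1) :
    IntegrableOn (fun s => powerLawExcess c α M s ^ p) (Ioi 0) := by
  have hind := integrable_indicator_Ioc_mul_rpow (r := -(p * α)) (by linarith) (c ^ p)
    (δ := (c / M) ^ (1 / α)) (by positivity)
  refine hind.integrableOn.mono'
    (Measurable.aestronglyMeasurable (by unfold powerLawExcess; fun_prop)) ?_
  filter_upwards [self_mem_ae_restrict measurableSet_Ioi] with s hs
  rw [Real.norm_of_nonneg (Real.rpow_nonneg (powerLawExcess_nonneg ..) _)]
  exact powerLawExcess_rpow_le_indicator hc hM hα hp hs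

lemma intervalIntegral_powerLawExcess_rpow_le (hc : 0 < c) (hM : 0 < M) (hα : 0 < α)
    (hp : 0 < p) (hpα : p * α < 1) :
    ∫ s in (0:ℝ)..1, powerLawExcess c α M s ^ p ≤
      c ^ p * (c / M) ^ ((1 - p * α) / α) / (1 - p * α) := by
  set δ := (c / M) ^ (1 / α)
  have hδ : 0 ≤ δ := by positivity
  have hr : -1 < -(p * α) := by linarith
  have hind := integrable_indicator_Ioc_mul_rpow hr (c ^ p) hδ
  calc ∫ s in (0:ℝ)..1, powerLawExcess c α M s ^ p
      = ∫ s in Ioc 0 1, powerLawExcess c α M s ^ p := intervalIntegral.integral_of_le zero_le_one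
    _ ≤ ∫ s in Ioc 0 1, (Ioc 0 δ).indicator (fun s => c ^ p * s ^ (-(p * α))) s :=
        setIntegral_mono_on ((integrableOn_powerLawExcess_rpow hc hM hα hp hpα).mono_set
          Ioc_subset_Ioi_self) hind.integrableOn measurableSet_Ioc
          fun s hs => powerLawExcess_rpow_le_indicator hc hM hα hp hs.1
    _ ≤ ∫ s, (Ioc 0 δ).indicator (fun s => c ^ p * s ^ (-(p * α))) s :=
        setIntegral_le_integral hind (.of_forall (indicator_nonneg fun s hs =>
          mul_nonneg (by positivity) (Real.rpow_nonneg hs.1.le _)))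
    _ = c ^ p * (δ ^ (1 - p * α) / (1 - p * α)) := by
        rw [integral_indicator measurableSet_Ioc, ← intervalIntegral.integral_of_le hδ,
          intervalIntegral.integral_const_mul, integral_rpow (.inl hr),
          Real.zero_rpow (by linarith), neg_add_eq_sub, sub_zero]
    _ = c ^ p * (c / M) ^ ((1 - p * α) / α) / (1 - p * α) := by
        rw [← Real.rpow_mul (by positivity), one_div_mul_eq_div, mul_div_assoc]

end PowerLawExcess

/-- Tail bound for the power-law graphon `W(x,y) = (g(x)+g(y))/2` with
`g(x) = (1-α)(1-x)^{-α}`: `tail_ρ^{(p)}(W) = O(ρ^{(1-pα)/(pα)})` as `ρ → 0⁺`. -/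
theorem powerlaw_sum_tail_bound
    (α p : ℝ) (hα0 : 0 < α) (hα1 : α < 1) (hp : 1 ≤ p) (hpα : p < 1/α) :
    ∃ C₀ ρ₀ : ℝ, 0 < C₀ ∧ 0 < ρ₀ ∧ ∀ ρ : ℝ, 0 < ρ → ρ ≤ ρ₀ →
      (∫ x in Icc (0:ℝ) 1, ∫ y in Icc (0:ℝ) 1,
        |((1 - α) * (1 - x) ^ (-α) + (1 - α) * (1 - y) ^ (-α)) / 2 -
          min (((1 - α) * (1 - x) ^ (-α) + (1 - α) * (1 - y) ^ (-α)) / 2) (1/ρ)| ^ p)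
        ^ (1/p) ≤
      C₀ * ρ ^ ((1 - p * α) / (p * α)) := by
  have hc : 0 < 1 - α := by linarith
  have hpα' : p * α < 1 := by rwa [lt_div_iff₀ hα0] at hpα
  set e := (1 - p * α) / α
  set K := (1 - α) ^ p * (1 - α) ^ e / (1 - p * α)
  have hK : 0 < K := div_pos (by positivity) (by linarith)
  refine ⟨K ^ (1 / p), 1, by positivity, one_pos, fun ρ hρ _ => ?_⟩
  have : IsProbabilityMeasure (volume.restrict (Icc (0:ℝ) 1)) := ⟨by simp⟩
  have hM : (0:ℝ) < 1 / ρ := one_div_pos.2 hρ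
  have hφ : IntegrableOn (fun x => powerLawExcess (1 - α) α (1 / ρ) (1 - x) ^ p) (Icc 0 1) :=
    integrableOn_Icc_comp_one_sub <| (integrableOn_powerLawExcess_rpow hc hM hα0 (by linarith)
      hpα').mono_set Ioc_subset_Ioi_self
  have hbound : (∫ x in Icc (0:ℝ) 1, ∫ y in Icc (0:ℝ) 1,
        |((1 - α) * (1 - x) ^ (-α) + (1 - α) * (1 - y) ^ (-α)) / 2 -
          min (((1 - α) * (1 - x) ^ (-α) + (1 - α) * (1 - y) ^ (-α)) / 2) (1/ρ)| ^ p) ≤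
      K * ρ ^ e := calc
    _ ≤ ∫ x in Icc (0:ℝ) 1, powerLawExcess (1 - α) α (1 / ρ) (1 - x) ^ p :=
          integral_integral_le_integral_of_le_half_add hφ (fun _ _ => by positivity)
            fun _ _ => abs_sub_min_half_add_rpow_le hp _ _ _
    _ = ∫ s in (0:ℝ)..1, powerLawExcess (1 - α) α (1 / ρ) s ^ p :=
          integral_Icc_comp_one_sub fun s => powerLawExcess (1 - α) α (1 / ρ) s ^ p
    _ ≤ (1 - α) ^ p * ((1 - α) / (1 / ρ)) ^ e / (1 - p * α) :=
          intervalIntegral_powerLawExcess_rpow_le hc hM hα0 (by linarith) hpα'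
    _ = K * ρ ^ e := by rw [div_div_eq_mul_div, div_one, Real.mul_rpow hc.le hρ.le]; ring
  calc _ ≤ (K * ρ ^ e) ^ (1 / p) := Real.rpow_le_rpow
          (integral_nonneg fun _ => integral_nonneg fun _ => by positivity) hbound (by positivity)
    _ = K ^ (1 / p) * ρ ^ ((1 - p * α) / (p * α)) := by
        rw [Real.mul_rpow hK.le (by positivity), ← Real.rpow_mul hρ.le, div_mul_div_comm,
          mul_one, mul_comm α p]
end
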